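/- arXiv:2209.12819 — 3 statements merged into one kernel-verified Lean document; each statement's English description precedes it below -/
import Mathlib

section
/- Let N be a nunchaku of length at least 2. Then J_1(𝒮,N) does not hold. -/
namespace MB

/-- A marked hypergraph: a finite vertex set, an edge set of finite subsets of vertices,
and a set of marked vertices. -/
structure MarkedHypergraph (V : Type) where
  verts : Finset V
  edges : Finset (Finset V)
  marked : Finset V

namespace MarkedHypergraph

variable {V : Type} [DecidableEq V]

/-- The structural requirements on a marked hypergraph: nonempty vertex set, edges are
nonempty subsets of the vertex set, marked vertices are vertices. -/
def IsValid (H : MarkedHypergraph V) : Prop :=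
  H.verts.Nonempty ∧ (∀ e ∈ H.edges, e ⊆ H.verts ∧ e.Nonempty) ∧ H.marked ⊆ H.verts

/-- `k`-uniformity: every edge has exactly `k` vertices. -/
def IsUniform (H : MarkedHypergraph V) (k : ℕ) : Prop :=
  ∀ e ∈ H.edges, e.card = k

/-- `H^{+x}`: mark the vertex `x`. -/
def plus (H : MarkedHypergraph V) (x : V) : MarkedHypergraph V :=
  ⟨H.verts, H.edges, insert x H.marked⟩

/-- `H^{-y}`: remove the vertex `y` and all edges containing it. -/
def minus (H : MarkedHypergraph V) (y : V) : MarkedHypergraph V :=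
  ⟨H.verts.erase y, H.edges.filter fun e => y ∉ e, H.marked.erase y⟩

/-- `X` is a subhypergraph of `H`. -/
def IsSub (X H : MarkedHypergraph V) : Prop :=
  X.verts ⊆ H.verts ∧ X.edges ⊆ H.edges ∧ X.marked = X.verts ∩ H.marked

/-- A trivial Maker win: some edge has at most one non-marked vertex. -/
def TrivialMakerWin (H : MarkedHypergraph V) : Prop :=
  ∃ e ∈ H.edges, (e \ H.marked).card ≤ 1

theorem card_free_lt (H : MarkedHypergraph V) (x y : V)
    (hy : y ∈ (H.plus x).verts \ (H.plus x).marked) :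
    (((H.plus x).minus y).verts \ ((H.plus x).minus y).marked).card
      < (H.verts \ H.marked).card := by
  have hy' : y ∈ H.verts \ insert x H.marked := hy
  rw [Finset.mem_sdiff] at hy'
  have hyv : y ∈ H.verts := hy'.1
  have hym : y ∉ H.marked := fun h => hy'.2 (Finset.mem_insert_of_mem h)
  show (H.verts.erase y \ (insert x H.marked).erase y).card < (H.verts \ H.marked).card
  calc (H.verts.erase y \ (insert x H.marked).erase y).card
      ≤ ((H.verts \ H.marked).erase y).card := by
        apply Finset.card_le_card
        intro v hv
        rw [Finset.mem_sdiff, Finset.mem_erase] at hv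
        rw [Finset.mem_erase, Finset.mem_sdiff]
        exact ⟨hv.1.1, hv.1.2, fun hvm =>
          hv.2 (Finset.mem_erase.mpr ⟨hv.1.1, Finset.mem_insert_of_mem hvm⟩)⟩
    _ < (H.verts \ H.marked).card :=
        Finset.card_erase_lt_of_mem (Finset.mem_sdiff.mpr ⟨hyv, hym⟩)

/-- Maker win, defined by recursion on the number of non-marked vertices:
if at most one non-marked vertex remains, Maker wins iff the position is a trivial Maker
win; otherwise Maker wins iff he has a pick `x` such that for every answer `y` of Breaker,
the resulting position is a Maker win. -/
def MakerWin (H : MarkedHypergraph V) : Prop :=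
  if (H.verts \ H.marked).card ≤ 1 then TrivialMakerWin H
  else ∃ x ∈ H.verts \ H.marked,
    ∀ y ∈ (H.plus x).verts \ (H.plus x).marked, MakerWin ((H.plus x).minus y)
termination_by (H.verts \ H.marked).card
decreasing_by exact card_free_lt H _ _ (by assumption)

/-- Breaker win: not a Maker win. -/
def BreakerWin (H : MarkedHypergraph V) : Prop := ¬ H.MakerWin

open Classical in
/-- `τ_M(H)`: the minimum number of rounds Maker needs to claim a fully marked edge
(`⊤` if Breaker wins). -/
noncomputable def tauM (H : MarkedHypergraph V) : ℕ∞ :=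
  if TrivialMakerWin H then H.edges.inf fun e => ((e \ H.marked).card : ℕ∞)
  else if (H.verts \ H.marked).card ≤ 1 then (⊤ : ℕ∞)
  else 1 + (H.verts \ H.marked).inf fun x =>
    ((H.plus x).verts \ (H.plus x).marked).attach.sup fun y =>
      tauM ((H.plus x).minus y.1)
termination_by (H.verts \ H.marked).card
decreasing_by exact card_free_lt H _ _ y.2

end MarkedHypergraph

open MarkedHypergraph

variable {V : Type} [DecidableEq V]

/-- The intersection `I_H(𝒳)` of a collection `𝒳` of marked hypergraphs in `H`. -/
def inter (H : MarkedHypergraph V) (𝒳 : Set (MarkedHypergraph V)) : Set V :=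
  {y | y ∈ H.verts ∧ y ∉ H.marked ∧ ∀ X ∈ 𝒳, y ∈ X.verts}

/-- The union of a finite collection of marked hypergraphs. -/
def unionOf (O : Finset (MarkedHypergraph V)) : MarkedHypergraph V :=
  ⟨O.sup MarkedHypergraph.verts, O.sup MarkedHypergraph.edges, O.sup MarkedHypergraph.marked⟩

/-- Isomorphism of pointed marked hypergraphs. -/
def PointedIso (X : MarkedHypergraph V) (x : V) (Y : MarkedHypergraph V) (y : V) : Prop :=
  ∃ φ : V → V, Set.InjOn φ ↑X.verts ∧ X.verts.image φ = Y.verts ∧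
    (∀ e : Finset V, e ⊆ X.verts → (e ∈ X.edges ↔ e.image φ ∈ Y.edges)) ∧
    (∀ v ∈ X.verts, (v ∈ X.marked ↔ φ v ∈ Y.marked)) ∧ φ x = y

/-- `(D,x)` is a danger: `x` is a non-marked vertex and `D^{+x}` is a Maker win. -/
def IsDanger (D : MarkedHypergraph V) (x : V) : Prop :=
  x ∈ D.verts ∧ x ∉ D.marked ∧ (D.plus x).MakerWin

/-- A family of dangers: a set of pointed marked hypergraphs, all of which are dangers. -/
def IsDangerFamily (F : Set (MarkedHypergraph V × V)) : Prop :=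
  ∀ p ∈ F, IsDanger p.1 p.2

/-- The collection of all dangers at `x` in `H`: subhypergraphs `D` of `H` containing `x`
such that `D^{+x}` is a Maker win. -/
def dangersAt (H : MarkedHypergraph V) (x : V) : Set (MarkedHypergraph V) :=
  {D | D.IsValid ∧ D.IsSub H ∧ x ∈ D.verts ∧ (D.plus x).MakerWin}

/-- `xℱ(H)`: the collection of subhypergraphs `X` of `H` containing `x` such that `(X,x)`
is isomorphic to a member of the family `F`. -/
def xFam (F : Set (MarkedHypergraph V × V)) (H : MarkedHypergraph V) (x : V) :
    Set (MarkedHypergraph V) :=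
  {X | X.IsValid ∧ X.IsSub H ∧ x ∈ X.verts ∧ ∃ p ∈ F, PointedIso X x p.1 p.2}

/-- `J F r H` is the property `J_r(ℱ,H)` (for `r ≥ 1`; `J F 0 H` is `True` by convention). -/
def J (F : Set (MarkedHypergraph V × V)) : ℕ → MarkedHypergraph V → Prop
  | 0, _ => True
  | r + 1, H => ∀ x ∈ H.verts \ H.marked,
      ∃ y ∈ inter (H.plus x) (xFam F H x), J F r ((H.plus x).minus y)

/-- `P` is an `ab`-path (in a 3-uniform setting) of length `L`. -/
def IsPathLen (P : MarkedHypergraph V) (a b : V) (L : ℕ) : Prop :=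
  (L = 0 ∧ a = b ∧ P.verts = {a} ∧ P.edges = ∅) ∨
  (1 ≤ L ∧ a ≠ b ∧ ∃ e : ℕ → Finset V,
    P.edges = (Finset.range L).image e ∧
    P.verts = (Finset.range L).biUnion e ∧
    (∀ i, i < L → (e i).card = 3) ∧
    (∀ i j, i < L → j < L → i ≠ j → e i ≠ e j) ∧
    a ∈ e 0 ∧ b ∈ e (L - 1) ∧
    (∀ i, i + 1 < L → (e i ∩ e (i + 1)).card = 1) ∧
    (∀ i j, i + 2 ≤ j → j < L → e i ∩ e j = ∅) ∧
    (∀ i, 1 ≤ i → i < L → a ∉ e i) ∧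
    (∀ i, i + 1 < L → b ∉ e i))

/-- `P` is an `ab`-path. -/
def IsPath (P : MarkedHypergraph V) (a b : V) : Prop := ∃ L, IsPathLen P a b L

/-- `C` is an `a`-cycle of length `L`. -/
def IsCycleLen (C : MarkedHypergraph V) (a : V) (L : ℕ) : Prop :=
  2 ≤ L ∧ ∃ e : ℕ → Finset V,
    C.edges = (Finset.range L).image e ∧
    C.verts = (Finset.range L).biUnion e ∧
    (∀ i, i < L → (e i).card = 3) ∧
    (∀ i j, i < L → j < L → i ≠ j → e i ≠ e j) ∧
    a ∈ e 0 ∧ a ∈ e (L - 1) ∧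
    (∀ i, 0 < i → i + 1 < L → a ∉ e i) ∧
    (L = 2 → (e 0 ∩ e 1).card = 2) ∧
    (3 ≤ L → (e 0 ∩ e (L - 1) = {a} ∧ ∀ i, i + 1 < L → (e i ∩ e (i + 1)).card = 1)) ∧
    (∀ i j, i < j → j < L → 2 ≤ j - i → j - i ≤ L - 2 → e i ∩ e j = ∅)

/-- `C` is an `a`-cycle. -/
def IsCycle (C : MarkedHypergraph V) (a : V) : Prop := ∃ L, IsCycleLen C a L

/-- `T` is an `a`-tadpole: the union of an `ab`-path and a `b`-cycle meeting only at `b`. -/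
def IsTadpole (T : MarkedHypergraph V) (a : V) : Prop :=
  ∃ b P C, IsPath P a b ∧ IsCycle C b ∧ P.verts ∩ C.verts = {b} ∧
    T.verts = P.verts ∪ C.verts ∧ T.edges = P.edges ∪ C.edges

/-- `S` is an `x`-snake: an `xm`-path of positive length with `m` marked. -/
def IsSnake (S : MarkedHypergraph V) (x : V) : Prop :=
  ∃ m L, 1 ≤ L ∧ IsPathLen S x m L ∧ m ∈ S.marked

/-- `N` is a nunchaku: an `ab`-path of positive length with marked set exactly `{a,b}`. -/
def IsNunchaku (N : MarkedHypergraph V) : Prop :=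
  ∃ a b L, 1 ≤ L ∧ IsPathLen N a b L ∧ N.marked = {a, b}

/-- `C` is an `a`-necklace: an `a`-cycle with marked set exactly `{a}`. -/
def IsNecklace (C : MarkedHypergraph V) (a : V) : Prop :=
  ∃ L, IsCycleLen C a L ∧ C.marked = {a}

/-- The family `𝒮` of pointed snakes with exactly one marked vertex. -/
def famS : Set (MarkedHypergraph V × V) := {p | IsSnake p.1 p.2 ∧ p.1.marked.card = 1}

/-- The family `𝒞` of pointed cycles with no marked vertex. -/
def famC : Set (MarkedHypergraph V × V) := {p | IsCycle p.1 p.2 ∧ p.1.marked = ∅}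

/-- The family `𝒯` of pointed tadpoles with no marked vertex. -/
def famT : Set (MarkedHypergraph V × V) := {p | IsTadpole p.1 p.2 ∧ p.1.marked = ∅}

/-- `𝒟₀ = 𝒮 ∪ 𝒞`. -/
def famD0 : Set (MarkedHypergraph V × V) := famS ∪ famC

/-- `𝒟₁ = 𝒮 ∪ 𝒯`. -/
def famD1 : Set (MarkedHypergraph V × V) := famS ∪ famT

/-- `obs(ℱ)`: pointed marked hypergraphs `(D,x)` which, for some `ℱ`-dangerous vertex `z`,
are the union of a collection `𝒪` of subhypergraphs, each of which is (or becomes, once `x`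
is marked) an `ℱ`-danger at `z`, with `I_{D^{+x+z}}(𝒪) = ∅`. -/
def obs (F : Set (MarkedHypergraph V × V)) : Set (MarkedHypergraph V × V) :=
  {p | p.2 ∈ p.1.verts ∧ p.2 ∉ p.1.marked ∧
    ∃ z, z ∈ p.1.verts ∧ z ∉ p.1.marked ∧ z ≠ p.2 ∧
      ∃ O : Set (MarkedHypergraph V),
        (∀ X ∈ O, X.IsValid ∧ X.IsSub p.1) ∧
        (∀ X ∈ O, p.2 ∈ X.verts → X.plus p.2 ∈ xFam F (p.1.plus p.2) z) ∧
        (∀ X ∈ O, p.2 ∉ X.verts → X ∈ xFam F p.1 z) ∧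
        (∀ v ∈ p.1.verts, ∃ X ∈ O, v ∈ X.verts) ∧
        (∀ e ∈ p.1.edges, ∃ X ∈ O, e ∈ X.edges) ∧
        (∀ m ∈ p.1.marked, ∃ X ∈ O, m ∈ X.marked) ∧
        inter ((p.1.plus p.2).plus z) O = ∅}

/-- `obsr(ℱ)`: the members `(D,x)` of `obs(ℱ)` such that `D` contains no `ℱ`-danger at `x`. -/
def obsr (F : Set (MarkedHypergraph V × V)) : Set (MarkedHypergraph V × V) :=
  {p | p ∈ obs F ∧ xFam F p.1 p.2 = ∅}

/-- `ℱ^{*r}`. -/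
def star (F : Set (MarkedHypergraph V × V)) : ℕ → Set (MarkedHypergraph V × V)
  | 0 => F
  | r + 1 => F ∪ obs (star F r)

/-- `𝒟₂ = 𝒟₁ ∪ obsr(𝒟₁)`. -/
def famD2 : Set (MarkedHypergraph V × V) := famD1 ∪ obsr famD1

/-- The lengths of nunchakus contained in `H`. -/
def nunchakuLengths (H : MarkedHypergraph V) : Set ℕ :=
  {L | 1 ≤ L ∧ ∃ N a b, N.IsSub H ∧ IsPathLen N a b L ∧ N.marked = {a, b}}

/-- `H` contains a fully marked edge, a nunchaku, or a necklace. -/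
def WinPattern (H : MarkedHypergraph V) : Prop :=
  (∃ e ∈ H.edges, e ⊆ H.marked) ∨ (∃ N, N.IsSub H ∧ IsNunchaku N) ∨
    (∃ C a, C.IsSub H ∧ IsNecklace C a)

/-- `Wk k H`: Maker can force that after `k` rounds of play the updated marked hypergraph
contains a fully marked edge, a nunchaku or a necklace. -/
def Wk : ℕ → MarkedHypergraph V → Prop
  | 0, H => WinPattern H
  | k + 1, H => ∃ x ∈ H.verts \ H.marked,
      ∀ y ∈ (H.plus x).verts \ (H.plus x).marked, Wk k ((H.plus x).minus y)

end MB

lemma pointedIso_refl {V : Type} [DecidableEq V] (X : MB.MarkedHypergraph V) (x : V) :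
    MB.PointedIso X x X x :=
  ⟨id, Set.injOn_id _, Finset.image_id, fun e _ => by rw [Finset.image_id],
    fun v _ => Iff.rfl, rfl⟩

/-- Proposition 3.10: `J_1(𝒮,N)` fails on a nunchaku of length at least 2. -/
theorem statement17 {V : Type} [DecidableEq V] (N : MB.MarkedHypergraph V)
    (a b : V) (L : ℕ) (hL : 2 ≤ L) (hN : MB.IsPathLen N a b L)
    (hm : N.marked = {a, b}) :
    ¬ MB.J MB.famS 1 N := by
  rcases hN with ⟨hL0, -⟩ |
    ⟨-, hab, e, hedges, hverts, hcard, hdist, ha0, hbL, hint, hdisj, hanot, hbnot⟩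
  · omega
  -- pick x as the joint of e 0 and e 1
  have h01 : (e 0 ∩ e 1).card = 1 := hint 0 (by omega)
  obtain ⟨x, hx01⟩ := Finset.card_eq_one.mp h01
  have hxmem : x ∈ e 0 ∩ e 1 := by rw [hx01]; exact Finset.mem_singleton_self x
  have hx0 : x ∈ e 0 := (Finset.mem_inter.mp hxmem).1
  have hx1 : x ∈ e 1 := (Finset.mem_inter.mp hxmem).2
  have hb0 : b ∉ e 0 := hbnot 0 (by omega)
  have ha1 : a ∉ e 1 := hanot 1 le_rfl (by omega)
  have hxa : x ≠ a := fun h => ha1 (h ▸ hx1)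
  have hxb : x ≠ b := fun h => hb0 (h ▸ hx0)
  have hxN : x ∈ N.verts := by
    rw [hverts]; exact Finset.mem_biUnion.mpr ⟨0, Finset.mem_range.mpr (by omega), hx0⟩
  have hxnm : x ∉ N.marked := by
    rw [hm]; simp only [Finset.mem_insert, Finset.mem_singleton]
    rintro (h | h) <;> [exact hxa h; exact hxb h]
  -- the two snakes
  set S1 : MB.MarkedHypergraph V := ⟨e 0, {e 0}, {a}⟩ with hS1def
  set S2 : MB.MarkedHypergraph V :=
    ⟨(Finset.range (L - 1)).biUnion (fun i => e (i + 1)),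
      (Finset.range (L - 1)).image (fun i => e (i + 1)), {b}⟩ with hS2def
  have he0ne : (e 0).Nonempty := Finset.card_pos.mp (by rw [hcard 0 (by omega)]; omega)
  have hS1fam : S1 ∈ MB.xFam MB.famS N x := by
    refine ⟨⟨he0ne, ?_, ?_⟩, ⟨?_, ?_, ?_⟩, hx0, ⟨(S1, x), ⟨⟨a, 1, le_rfl, ?_, ?_⟩, ?_⟩,
      pointedIso_refl S1 x⟩⟩
    · intro e' he'
      rw [hS1def] at he'
      simp only [Finset.mem_singleton] at he'
      subst he'
      exact ⟨subset_rfl, he0ne⟩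
    · intro v hv
      rw [hS1def] at hv ⊢
      simp only [Finset.mem_singleton] at hv
      exact hv ▸ ha0
    · intro v hv
      rw [hverts]
      exact Finset.mem_biUnion.mpr ⟨0, Finset.mem_range.mpr (by omega), hv⟩
    · intro e' he'
      simp only [hS1def, Finset.mem_singleton] at he'
      rw [hedges, he']
      exact Finset.mem_image.mpr ⟨0, Finset.mem_range.mpr (by omega), rfl⟩
    · show ({a} : Finset V) = e 0 ∩ N.marked
      rw [hm]
      ext v
      simp only [Finset.mem_singleton, Finset.mem_inter, Finset.mem_insert]
      constructor
      · rintro rfl; exact ⟨ha0, Or.inl rfl⟩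
      · rintro ⟨hv, rfl | rfl⟩
        · rfl
        · exact absurd hv hb0
    · -- IsPathLen S1 x a 1
      refine Or.inr ⟨le_rfl, hxa, fun _ => e 0, ?_, ?_, fun i _ => hcard 0 (by omega),
        fun i j hi hj hij => by omega, hx0, ha0, fun i hi => by omega,
        fun i j hij hj => by omega, fun i hi1 hi2 => by omega, fun i hi => by omega⟩
      · show ({e 0} : Finset (Finset V)) = (Finset.range 1).image fun _ => e 0
        simp
      · show e 0 = (Finset.range 1).biUnion fun _ => e 0
        simp
    · exact Finset.mem_singleton_self a
    · show ({a} : Finset V).card = 1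
      simp
  have hS2fam : S2 ∈ MB.xFam MB.famS N x := by
    have hvsub : ∀ v ∈ S2.verts, v ∈ N.verts := by
      intro v hv
      rw [hS2def] at hv
      obtain ⟨i, hi, hvi⟩ := Finset.mem_biUnion.mp hv
      rw [Finset.mem_range] at hi
      rw [hverts]
      exact Finset.mem_biUnion.mpr ⟨i + 1, Finset.mem_range.mpr (by omega), hvi⟩
    have hxS2 : x ∈ S2.verts := by
      rw [hS2def]
      exact Finset.mem_biUnion.mpr ⟨0, Finset.mem_range.mpr (by omega), hx1⟩
    have hbS2 : b ∈ S2.verts := by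
      rw [hS2def]
      refine Finset.mem_biUnion.mpr ⟨L - 2, Finset.mem_range.mpr (by omega), ?_⟩
      have : L - 2 + 1 = L - 1 := by omega
      rw [this]; exact hbL
    refine ⟨⟨⟨x, hxS2⟩, ?_, ?_⟩, ⟨hvsub, ?_, ?_⟩, hxS2,
      ⟨(S2, x), ⟨⟨b, L - 1, by omega, ?_, Finset.mem_singleton_self b⟩, by show ({b} : Finset V).card = 1; simp⟩,
      pointedIso_refl S2 x⟩⟩
    · intro e' he'
      rw [hS2def] at he'
      obtain ⟨i, hi, rfl⟩ := Finset.mem_image.mp he'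
      rw [Finset.mem_range] at hi
      constructor
      · intro v hv
        rw [hS2def]
        exact Finset.mem_biUnion.mpr ⟨i, Finset.mem_range.mpr hi, hv⟩
      · exact Finset.card_pos.mp (by rw [hcard (i + 1) (by omega)]; omega)
    · intro v hv
      rw [hS2def] at hv
      simp only [Finset.mem_singleton] at hv
      exact hv ▸ hbS2
    · intro e' he'
      rw [hS2def] at he'
      obtain ⟨i, hi, rfl⟩ := Finset.mem_image.mp he'
      rw [Finset.mem_range] at hi
      rw [hedges]
      exact Finset.mem_image.mpr ⟨i + 1, Finset.mem_range.mpr (by omega), rfl⟩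
    · -- S2.marked = S2.verts ∩ N.marked
      show ({b} : Finset V) = S2.verts ∩ N.marked
      rw [hm]
      ext v
      simp only [Finset.mem_singleton, Finset.mem_inter, Finset.mem_insert]
      constructor
      · rintro rfl; exact ⟨hbS2, Or.inr rfl⟩
      · rintro ⟨hv, rfl | rfl⟩
        · exfalso
          obtain ⟨i, hi, hvi⟩ := Finset.mem_biUnion.mp hv
          rw [Finset.mem_range] at hi
          exact hanot (i + 1) (by omega) (by omega) hvi
        · rfl
    · -- IsPathLen S2 x b (L-1)
      refine Or.inr ⟨by omega, hxb, fun i => e (i + 1), rfl, rfl,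
        fun i hi => hcard (i + 1) (by omega),
        fun i j hi hj hij => hdist (i + 1) (j + 1) (by omega) (by omega) (by omega),
        hx1, ?_, fun i hi => hint (i + 1) (by omega),
        fun i j hij hj => hdisj (i + 1) (j + 1) (by omega) (by omega), ?_,
        fun i hi => hbnot (i + 1) (by omega)⟩
      · show b ∈ e (L - 1 - 1 + 1)
        have : L - 1 - 1 + 1 = L - 1 := by omega
        rw [this]; exact hbL
      · intro i hi1 hi2 hx'
        have hd : e 0 ∩ e (i + 1) = ∅ := hdisj 0 (i + 1) (by omega) (by omega)
        exact Finset.notMem_empty x (hd ▸ Finset.mem_inter.mpr ⟨hx0, hx'⟩)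
  -- conclude
  intro hJ
  obtain ⟨y, hy, -⟩ := hJ x (Finset.mem_sdiff.mpr ⟨hxN, hxnm⟩)
  obtain ⟨-, hy2, hy3⟩ := hy
  have hy1 : y ∈ e 0 := hy3 S1 hS1fam
  have hy2' : y ∈ S2.verts := hy3 S2 hS2fam
  rw [hS2def] at hy2'
  obtain ⟨i, hi, hyi⟩ := Finset.mem_biUnion.mp hy2'
  rw [Finset.mem_range] at hi
  rcases Nat.eq_zero_or_pos i with rfl | hipos
  · have : y ∈ e 0 ∩ e 1 := Finset.mem_inter.mpr ⟨hy1, hyi⟩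
    rw [hx01, Finset.mem_singleton] at this
    exact hy2 (this ▸ Finset.mem_insert_self x N.marked)
  · have hd : e 0 ∩ e (i + 1) = ∅ := hdisj 0 (i + 1) (by omega) (by omega)
    exact Finset.notMem_empty y (hd ▸ Finset.mem_inter.mpr ⟨hy1, hyi⟩)
end

section
/- Let r ≥ 1 be an integer and let H be a 3-uniform marked hypergraph that is not a trivial Maker win, with |V(H)∖M(H)| ≥ 2r. Define predicates W_k on marked hypergraphs by: W_0(H') holds iff H' contains a fully marked edge (an e ∈ E(H') with e ⊆ M(H')), a nunchaku, or a necklace as a subhypergraph; and for k ≥ 1, W_k(H') holds iff there exists x ∈ V(H')∖M(H') such that for all y ∈ V(H'^{+x})∖M(H'^{+x}), W_{k−1}(H'^{+x-y}) holds. Then J_r(𝒟_0,H) does not hold if and only if W_r(H) holds (i.e., Maker can force that after r rounds of play the updated marked hypergraph contains a fully marked edge, a nunchaku or a necklace). -/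
/-!
Up to pointed isomorphism the 𝒟₀-dangers at `x` are exactly the snakes with one marked vertex
and the unmarked cycles through `x`. So if Breaker answers Maker's `x` with a vertex `y` missing
one of them, that danger with `x` marked is a nunchaku or a necklace of `H^{+x-y}`; conversely,
a nunchaku or necklace of `H^{+x-y}` either lies in `H` already or is such a danger with `x`
marked. A fully marked edge, nunchaku or necklace, once present, survives any number of rounds:
Maker marks the vertex `c` where its first edge meets the next one, splitting it into two snakes
at `c` with no other common unmarked vertex, so Breaker can destroy only one of them. Unfolding
`J_{r+1}` and `W_{r+1}` by one round, the answers `y ∈ I_{H^{+x}}(x𝒟₀(H))` keep `H^{+x-y}` a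
nontrivial position (induction on `r`), and all other answers create a pattern that Maker keeps.
-/

namespace MB

open Finset

variable {V : Type} [DecidableEq V]

namespace MarkedHypergraph

variable {H X : MarkedHypergraph V} {x y : V}

@[simp] lemma plus_verts : (H.plus x).verts = H.verts := rfl
@[simp] lemma plus_edges : (H.plus x).edges = H.edges := rfl
@[simp] lemma plus_marked : (H.plus x).marked = insert x H.marked := rfl
@[simp] lemma minus_verts : (H.minus y).verts = H.verts.erase y := rfl
@[simp] lemma minus_edges : (H.minus y).edges = H.edges.filter (y ∉ ·) := rfl
@[simp] lemma minus_marked : (H.minus y).marked = H.marked.erase y := rfl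

lemma mem_free_plus {v : V} :
    v ∈ (H.plus x).verts \ (H.plus x).marked ↔ v ∈ H.verts \ H.marked ∧ v ≠ x := by
  simp only [plus_verts, plus_marked, mem_sdiff, mem_insert]
  tauto

lemma card_free_plus_minus (hx : x ∈ H.verts \ H.marked)
    (hy : y ∈ (H.plus x).verts \ (H.plus x).marked) :
    (((H.plus x).minus y).verts \ ((H.plus x).minus y).marked).card
      = (H.verts \ H.marked).card - 2 := by
  obtain ⟨hy, hyx⟩ := mem_free_plus.mp hy
  have hfree : ((H.plus x).minus y).verts \ ((H.plus x).minus y).marked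
      = ((H.verts \ H.marked).erase x).erase y := by
    ext v
    simp only [plus_verts, plus_marked, minus_verts, minus_marked, mem_sdiff, mem_erase,
      mem_insert]
    tauto
  rw [hfree, card_erase_of_mem (mem_erase.mpr ⟨hyx, hy⟩), card_erase_of_mem hx]
  omega

lemma IsValid.plus_minus (h : H.IsValid) (hx : x ∈ H.verts) (hxy : x ≠ y) :
    ((H.plus x).minus y).IsValid := by
  obtain ⟨-, hE, hM⟩ := h
  refine ⟨⟨x, by simp [hxy, hx]⟩, fun e he => ?_, fun v hv => ?_⟩
  · simp only [minus_edges, plus_edges, mem_filter] at he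
    exact ⟨fun v hv => mem_erase.mpr ⟨fun h => he.2 (h ▸ hv), (hE e he.1).1 hv⟩,
      (hE e he.1).2⟩
  · simp only [minus_marked, plus_marked, mem_erase, mem_insert] at hv
    rcases hv with ⟨hvy, rfl | hv⟩
    · exact mem_erase.mpr ⟨hvy, hx⟩
    · exact mem_erase.mpr ⟨hvy, hM hv⟩

lemma IsUniform.plus_minus {k : ℕ} (h : H.IsUniform k) : ((H.plus x).minus y).IsUniform k :=
  fun e he => h e (mem_filter.mp he).1

lemma IsSub.marked_subset (h : X.IsSub H) : X.marked ⊆ X.verts := by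
  rw [h.2.2]
  exact inter_subset_left

lemma IsSub.trans {Y : MarkedHypergraph V} (hXY : X.IsSub Y) (hYH : Y.IsSub H) : X.IsSub H := by
  refine ⟨hXY.1.trans hYH.1, hXY.2.1.trans hYH.2.1, ?_⟩
  rw [hXY.2.2, hYH.2.2, ← inter_assoc, inter_eq_left.mpr hXY.1]

lemma IsSub.plus_minus (h : X.IsSub H) (hx : x ∈ X.verts) (hy : y ∉ X.verts)
    (hE : ∀ e ∈ X.edges, e ⊆ X.verts) : (X.plus x).IsSub ((H.plus x).minus y) := by
  refine ⟨fun v hv => ?_, fun e he => ?_, ?_⟩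
  · exact mem_erase.mpr ⟨fun h => hy (h ▸ hv), h.1 hv⟩
  · exact mem_filter.mpr ⟨h.2.1 he, fun hye => hy (hE e he hye)⟩
  · ext v
    simp only [plus_marked, h.2.2, plus_verts, minus_marked, mem_insert, mem_inter, mem_erase]
    grind

lemma IsSub.mem_marked_of_plus_minus (h : X.IsSub ((H.plus x).minus y)) (hx : x ∈ X.verts) :
    x ∈ X.marked := by
  rw [h.2.2]
  simpa [hx] using (mem_erase.mp (h.1 hx)).1

def unmark (X : MarkedHypergraph V) (x : V) : MarkedHypergraph V :=
  ⟨X.verts, X.edges, X.marked.erase x⟩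

lemma IsSub.unmark_of_plus_minus (h : X.IsSub ((H.plus x).minus y)) (hx : x ∉ H.marked) :
    (X.unmark x).IsSub H := by
  refine ⟨fun v hv => (mem_erase.mp (h.1 hv)).2, fun e he => (mem_filter.mp (h.2.1 he)).1, ?_⟩
  have hy : y ∉ X.verts := fun hy => (mem_erase.mp (h.1 hy)).1 rfl
  ext v
  simp only [unmark, h.2.2, plus_marked, minus_marked, mem_erase, mem_inter, mem_insert]
  grind

end MarkedHypergraph

open MarkedHypergraph

section Paths

variable {P X : MarkedHypergraph V} {a b : V} {L : ℕ}

lemma subset_biUnion_and_card_of_mem_image {e : ℕ → Finset V} (h3 : ∀ i < L, (e i).card = 3)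
    {f : Finset V} (hf : f ∈ (range L).image e) : f ⊆ (range L).biUnion e ∧ f.card = 3 := by
  obtain ⟨i, hi, rfl⟩ := mem_image.mp hf
  exact ⟨subset_biUnion_of_mem e hi, h3 i (mem_range.mp hi)⟩

lemma IsPathLen.left_mem (h : IsPathLen P a b L) : a ∈ P.verts := by
  rcases h with ⟨-, -, hV, -⟩ | ⟨hL, -, e, -, hV, -, -, ha, -⟩
  · simp [hV]
  · rw [hV]
    exact mem_biUnion.mpr ⟨0, mem_range.mpr hL, ha⟩

lemma IsPathLen.right_mem (h : IsPathLen P a b L) : b ∈ P.verts := by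
  rcases h with ⟨-, rfl, hV, -⟩ | ⟨hL, -, e, -, hV, -, -, -, hb, -⟩
  · simp [hV]
  · rw [hV]
    exact mem_biUnion.mpr ⟨L - 1, mem_range.mpr (by omega), hb⟩

lemma IsPathLen.ne (h : IsPathLen P a b L) (hL : 1 ≤ L) : a ≠ b := by
  rcases h with ⟨h0, -⟩ | ⟨-, hab, -⟩
  · omega
  · exact hab

lemma IsPathLen.edge_subset_and_card (h : IsPathLen P a b L) :
    ∀ f ∈ P.edges, f ⊆ P.verts ∧ f.card = 3 := by
  rcases h with ⟨-, -, -, hE⟩ | ⟨-, -, e, hE, hV, h3, -⟩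
  · simp [hE]
  · rw [hE, hV]
    exact fun f => subset_biUnion_and_card_of_mem_image h3

lemma IsPathLen.isValid (h : IsPathLen P a b L) (hM : P.marked ⊆ P.verts) : P.IsValid :=
  ⟨⟨a, h.left_mem⟩, fun f hf => ⟨(h.edge_subset_and_card f hf).1,
    card_pos.mp (by rw [(h.edge_subset_and_card f hf).2]; omega)⟩, hM⟩

lemma IsCycleLen.mem (h : IsCycleLen P a L) : a ∈ P.verts := by
  obtain ⟨hL, e, -, hV, -, -, ha, -⟩ := h
  rw [hV]
  exact mem_biUnion.mpr ⟨0, mem_range.mpr (by omega), ha⟩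

lemma IsCycleLen.edge_subset_and_card (h : IsCycleLen P a L) :
    ∀ f ∈ P.edges, f ⊆ P.verts ∧ f.card = 3 := by
  obtain ⟨-, e, hE, hV, h3, -⟩ := h
  rw [hE, hV]
  exact fun f => subset_biUnion_and_card_of_mem_image h3

lemma IsCycleLen.isValid (h : IsCycleLen P a L) (hM : P.marked ⊆ P.verts) : P.IsValid :=
  ⟨⟨a, h.mem⟩, fun f hf => ⟨(h.edge_subset_and_card f hf).1,
    card_pos.mp (by rw [(h.edge_subset_and_card f hf).2]; omega)⟩, hM⟩

lemma isPathLen_one {f : Finset V} (hV : P.verts = f) (hE : P.edges = {f}) (h3 : f.card = 3)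
    (ha : a ∈ f) (hb : b ∈ f) (hab : a ≠ b) : IsPathLen P a b 1 := by
  refine Or.inr ⟨le_rfl, hab, fun _ => f, by simp [hE], by simp [hV], fun _ _ => h3, ?_, ha, hb,
    ?_, ?_, ?_, ?_⟩ <;> intros <;> omega

lemma IsPathLen.symm (h : IsPathLen P a b L) : IsPathLen P b a L := by
  rcases h with ⟨h0, rfl, hV, hE⟩ |
    ⟨hL, hab, e, hE, hV, h3, hd, ha, hb, hcons, hfar, hano, hbno⟩
  · exact Or.inl ⟨h0, rfl, hV, hE⟩
  have hrev : (range L).image (fun i => L - 1 - i) = range L := by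
    ext i
    simp only [mem_image, mem_range]
    exact ⟨fun ⟨j, hj, hij⟩ => by omega, fun hi => ⟨L - 1 - i, by omega, by omega⟩⟩
  refine Or.inr ⟨hL, hab.symm, fun i => e (L - 1 - i), ?_, ?_, fun i hi => h3 _ (by omega),
    fun i j hi hj hij => hd _ _ (by omega) (by omega) (by omega), hb, by simpa using ha,
    fun i hi => ?_, fun i j hij hj => ?_, fun i h1 hi => hbno _ (by omega),
    fun i hi => hano _ (by omega) (by omega)⟩
  · conv_lhs => rw [hE, ← hrev, image_image]
    rfl
  · conv_lhs => rw [hV, ← hrev, image_biUnion]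
  · show (e (L - 1 - i) ∩ e (L - 1 - (i + 1))).card = 1
    rw [show L - 1 - i = L - 1 - (i + 1) + 1 by omega, inter_comm]
    exact hcons _ (by omega)
  · rw [inter_comm]
    exact hfar _ _ (by omega) (by omega)

lemma IsPathLen.exists_split (h : IsPathLen X a b L) (hL : 2 ≤ L) :
    ∃ c ∈ X.verts, c ≠ a ∧ c ≠ b ∧ ∃ P₁ P₂ : MarkedHypergraph V,
      P₁.IsSub X ∧ P₂.IsSub X ∧ IsPathLen P₁ c a 1 ∧ IsPathLen P₂ c b (L - 1) ∧
      P₁.verts ∩ P₂.verts = {c} := by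
  rcases h with ⟨h0, -⟩ | ⟨-, -, e, hE, hV, h3, hd, ha, hb, hcons, hfar, hano, hbno⟩
  · omega
  obtain ⟨c, hc⟩ := card_eq_one.mp (hcons 0 (by omega))
  obtain ⟨hc0, hc1⟩ := mem_inter.mp (hc ▸ mem_singleton_self c)
  have hca : c ≠ a := fun hca => hano 1 le_rfl (by omega) (hca ▸ hc1)
  have hcb : c ≠ b := fun hcb => hbno 0 (by omega) (hcb ▸ hc0)
  have hsub : ∀ i < L, e i ⊆ X.verts := fun i hi =>
    hV ▸ subset_biUnion_of_mem e (mem_range.mpr hi)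
  have hmemE : ∀ i < L, e i ∈ X.edges := fun i hi =>
    hE ▸ mem_image_of_mem e (mem_range.mpr hi)
  set T := (range (L - 1)).biUnion fun i => e (i + 1)
  have htail :
      IsPathLen ⟨T, (range (L - 1)).image fun i => e (i + 1), T ∩ X.marked⟩ c b (L - 1) :=
    Or.inr ⟨by omega, hcb, fun i => e (i + 1), rfl, rfl, fun i hi => h3 _ (by omega),
      fun i j hi hj hij => hd _ _ (by omega) (by omega) (by omega), hc1,
      show _ ∈ e (L - 1 - 1 + 1) by rwa [show L - 1 - 1 + 1 = L - 1 by omega],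
      fun i hi => hcons _ (by omega), fun i j hij hj => hfar _ _ (by omega) (by omega),
      fun i h1 hi hci => by
        simpa [hfar 0 (i + 1) (by omega) (by omega)] using mem_inter.mpr ⟨hc0, hci⟩,
      fun i hi => hbno _ (by omega)⟩
  refine ⟨c, hsub 0 (by omega) hc0, hca, hcb, ⟨e 0, {e 0}, e 0 ∩ X.marked⟩, _,
    ⟨hsub 0 (by omega), singleton_subset_iff.mpr (hmemE 0 (by omega)), rfl⟩,
    ⟨biUnion_subset.mpr fun i hi => hsub _ (by simp at hi; omega),
      image_subset_iff.mpr fun i hi => hmemE _ (by simp at hi; omega), rfl⟩,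
    isPathLen_one rfl rfl (h3 0 (by omega)) hc0 ha hca, htail, ?_⟩
  ext v
  simp only [T, mem_inter, mem_biUnion, mem_range, mem_singleton]
  constructor
  · rintro ⟨hv0, i, hi, hvi⟩
    rcases Nat.eq_zero_or_pos i with rfl | hpos
    · simpa [hc] using mem_inter.mpr ⟨hv0, hvi⟩
    · simpa [hfar 0 (i + 1) (by omega) (by omega)] using mem_inter.mpr ⟨hv0, hvi⟩
  · rintro rfl
    exact ⟨hc0, 0, by omega, hc1⟩

lemma IsCycleLen.exists_split (h : IsCycleLen X a L) :
    ∃ c ∈ X.verts, c ≠ a ∧ ∃ P₁ P₂ : MarkedHypergraph V,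
      P₁.IsSub X ∧ P₂.IsSub X ∧ IsPathLen P₁ c a 1 ∧ IsPathLen P₂ c a (L - 1) ∧
      P₁.verts ∩ P₂.verts ⊆ {c, a} := by
  obtain ⟨hL, e, hE, hV, h3, hd, ha0, haL, hano, h2c, h3c, hfar⟩ := h
  have hmeet0 : ∀ i, 2 ≤ i → i < L → ∀ v ∈ e 0, v ∈ e i → v = a := by
    intro i hi2 hi v hv0 hvi
    rcases Nat.lt_or_ge i (L - 1) with hlt | hge
    · simpa [hfar 0 i (by omega) hi (by omega) (by omega)] using mem_inter.mpr ⟨hv0, hvi⟩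
    · obtain rfl : i = L - 1 := by omega
      simpa [(h3c (by omega)).1] using mem_inter.mpr ⟨hv0, hvi⟩
  have hnear : ((e 0 ∩ e 1).erase a).card = 1 := by
    rcases Nat.lt_or_ge 2 L with h3L | h2L
    · rw [erase_eq_of_notMem fun ha => hano 1 (by omega) (by omega) (mem_inter.mp ha).2]
      exact (h3c h3L).2 0 (by omega)
    · obtain rfl : L = 2 := by omega
      rw [card_erase_of_mem (mem_inter.mpr ⟨ha0, haL⟩), h2c rfl]
  obtain ⟨c, hc⟩ := card_eq_one.mp hnear
  obtain ⟨hca, hc0, hc1⟩ : c ≠ a ∧ c ∈ e 0 ∧ c ∈ e 1 := by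
    have hcmem : c ∈ (e 0 ∩ e 1).erase a := hc ▸ mem_singleton_self c
    simpa using hcmem
  have hsub : ∀ i < L, e i ⊆ X.verts := fun i hi =>
    hV ▸ subset_biUnion_of_mem e (mem_range.mpr hi)
  have hmemE : ∀ i < L, e i ∈ X.edges := fun i hi =>
    hE ▸ mem_image_of_mem e (mem_range.mpr hi)
  set T := (range (L - 1)).biUnion fun i => e (i + 1)
  have htail :
      IsPathLen ⟨T, (range (L - 1)).image fun i => e (i + 1), T ∩ X.marked⟩ c a (L - 1) :=
    Or.inr ⟨by omega, hca, fun i => e (i + 1), rfl, rfl, fun i hi => h3 _ (by omega),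
      fun i j hi hj hij => hd _ _ (by omega) (by omega) (by omega), hc1,
      show _ ∈ e (L - 1 - 1 + 1) by rwa [show L - 1 - 1 + 1 = L - 1 by omega],
      fun i hi => (h3c (by omega)).2 _ (by omega),
      fun i j hij hj => hfar _ _ (by omega) (by omega) (by omega) (by omega),
      fun i h1 hi hci => hca (hmeet0 (i + 1) (by omega) (by omega) c hc0 hci),
      fun i hi => hano _ (by omega) (by omega)⟩
  refine ⟨c, hsub 0 (by omega) hc0, hca, ⟨e 0, {e 0}, e 0 ∩ X.marked⟩, _,
    ⟨hsub 0 (by omega), singleton_subset_iff.mpr (hmemE 0 (by omega)), rfl⟩,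
    ⟨biUnion_subset.mpr fun i hi => hsub _ (by simp at hi; omega),
      image_subset_iff.mpr fun i hi => hmemE _ (by simp at hi; omega), rfl⟩,
    isPathLen_one rfl rfl (h3 0 (by omega)) hc0 ha0 hca, htail, ?_⟩
  simp only [T, subset_iff, mem_inter, mem_biUnion, mem_range, mem_insert, mem_singleton]
  rintro v ⟨hv0, i, hi, hvi⟩
  rcases Nat.eq_zero_or_pos i with rfl | hpos
  · by_cases hva : v = a
    · exact Or.inr hva
    · exact Or.inl (by simpa [hc, hva] using mem_erase.mpr ⟨hva, mem_inter.mpr ⟨hv0, hvi⟩⟩)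
  · exact Or.inr (hmeet0 (i + 1) (by omega) (by omega) v hv0 hvi)

end Paths

section Iso

variable {X Y : MarkedHypergraph V} {φ : V → V}

def IsUnmarkedIso (φ : V → V) (X Y : MarkedHypergraph V) : Prop :=
  Set.InjOn φ X.verts ∧ X.verts.image φ = Y.verts ∧
    ∀ e ⊆ X.verts, e ∈ X.edges ↔ e.image φ ∈ Y.edges

def vertsPreimage (X : MarkedHypergraph V) (φ : V → V) (s : Finset V) : Finset V :=
  X.verts.filter fun v => φ v ∈ s

@[simp] lemma mem_vertsPreimage {s : Finset V} {v : V} :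
    v ∈ vertsPreimage X φ s ↔ v ∈ X.verts ∧ φ v ∈ s :=
  mem_filter

lemma vertsPreimage_inter (s t : Finset V) :
    vertsPreimage X φ (s ∩ t) = vertsPreimage X φ s ∩ vertsPreimage X φ t := by
  ext v
  simp only [mem_vertsPreimage, mem_inter]
  tauto

@[simp] lemma vertsPreimage_empty : vertsPreimage X φ ∅ = ∅ := by
  simp [vertsPreimage]

namespace IsUnmarkedIso

lemma mem_verts (hφ : IsUnmarkedIso φ X Y) {v : V} (hv : v ∈ X.verts) : φ v ∈ Y.verts :=
  hφ.2.1 ▸ mem_image_of_mem φ hv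

lemma image_vertsPreimage (hφ : IsUnmarkedIso φ X Y) {s : Finset V} (hs : s ⊆ Y.verts) :
    (vertsPreimage X φ s).image φ = s := by
  ext w
  simp only [mem_image, mem_vertsPreimage]
  constructor
  · rintro ⟨v, ⟨-, hvs⟩, rfl⟩
    exact hvs
  · intro hw
    obtain ⟨v, hv, rfl⟩ := mem_image.mp (hφ.2.1 ▸ hs hw)
    exact ⟨v, ⟨hv, hw⟩, rfl⟩

lemma card_vertsPreimage (hφ : IsUnmarkedIso φ X Y) {s : Finset V} (hs : s ⊆ Y.verts) :
    (vertsPreimage X φ s).card = s.card := by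
  have hinj : Set.InjOn φ (vertsPreimage X φ s) :=
    hφ.1.mono fun v hv => (mem_vertsPreimage.mp hv).1
  rw [← card_image_of_injOn hinj, hφ.image_vertsPreimage hs]

lemma vertsPreimage_image (hφ : IsUnmarkedIso φ X Y) {f : Finset V} (hf : f ⊆ X.verts) :
    vertsPreimage X φ (f.image φ) = f := by
  ext v
  simp only [mem_vertsPreimage, mem_image]
  constructor
  · rintro ⟨hv, u, hu, huv⟩
    rwa [← hφ.1 (hf hu) hv huv]
  · intro hv
    exact ⟨hf hv, v, hv, rfl⟩

lemma edges_eq (hφ : IsUnmarkedIso φ X Y) (hX : ∀ f ∈ X.edges, f ⊆ X.verts)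
    {e : ℕ → Finset V} {L : ℕ} (hE : Y.edges = (range L).image e)
    (he : ∀ i < L, e i ⊆ Y.verts) :
    X.edges = (range L).image fun i => vertsPreimage X φ (e i) := by
  ext f
  simp only [mem_image, mem_range]
  constructor
  · intro hf
    obtain ⟨i, hi, hei⟩ := mem_image.mp (hE ▸ (hφ.2.2 f (hX f hf)).mp hf)
    exact ⟨i, mem_range.mp hi, by rw [hei, hφ.vertsPreimage_image (hX f hf)]⟩
  · rintro ⟨i, hi, rfl⟩
    refine (hφ.2.2 (vertsPreimage X φ (e i)) (filter_subset _ _)).mpr ?_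
    rw [hφ.image_vertsPreimage (he i hi), hE]
    exact mem_image_of_mem e (mem_range.mpr hi)

lemma verts_eq (hφ : IsUnmarkedIso φ X Y) {e : ℕ → Finset V} {L : ℕ}
    (hV : Y.verts = (range L).biUnion e) :
    X.verts = (range L).biUnion fun i => vertsPreimage X φ (e i) := by
  ext v
  simp only [mem_biUnion, mem_vertsPreimage]
  constructor
  · intro hv
    obtain ⟨i, hi, hvi⟩ := mem_biUnion.mp (hV ▸ hφ.mem_verts hv)
    exact ⟨i, hi, hv, hvi⟩
  · rintro ⟨-, -, hv, -⟩
    exact hv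

lemma isPathLen (hφ : IsUnmarkedIso φ X Y) (hX : ∀ f ∈ X.edges, f ⊆ X.verts) {a b : V}
    {L : ℕ} (ha : a ∈ X.verts) (hb : b ∈ X.verts) (h : IsPathLen Y (φ a) (φ b) L) :
    IsPathLen X a b L := by
  rcases h with ⟨h0, hab, hV, hE⟩ |
    ⟨hL, hab, e, hE, hV, h3, hd, ha', hb', hcons, hfar, hano, hbno⟩
  · obtain rfl := hφ.1 ha hb hab
    refine Or.inl ⟨h0, rfl, eq_singleton_iff_unique_mem.mpr ⟨ha, fun v hv => hφ.1 hv ha ?_⟩,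
      eq_empty_of_forall_notMem fun f hf => ?_⟩
    · simpa [hV] using hφ.mem_verts hv
    · simpa [hE] using (hφ.2.2 f (hX f hf)).mp hf
  have he : ∀ i < L, e i ⊆ Y.verts := fun i hi =>
    hV ▸ subset_biUnion_of_mem e (mem_range.mpr hi)
  refine Or.inr ⟨hL, fun h => hab (h ▸ rfl), fun i => vertsPreimage X φ (e i),
    hφ.edges_eq hX hE he, hφ.verts_eq hV, fun i hi => (hφ.card_vertsPreimage (he i hi)).trans
    (h3 i hi), fun i j hi hj hij h => hd i j hi hj hij ?_, by simp [ha, ha'], by simp [hb, hb'],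
    fun i hi => ?_, fun i j hij hj => by rw [← vertsPreimage_inter, hfar i j hij hj,
    vertsPreimage_empty], fun i h1 hi => by simp [hano i h1 hi], fun i hi => by simp [hbno i hi]⟩
  · rw [← hφ.image_vertsPreimage (he i hi), show vertsPreimage X φ (e i) = _ from h,
      hφ.image_vertsPreimage (he j hj)]
  · rw [← vertsPreimage_inter,
      hφ.card_vertsPreimage (inter_subset_left.trans (he i (by omega)))]
    exact hcons i hi

lemma isCycleLen (hφ : IsUnmarkedIso φ X Y) (hX : ∀ f ∈ X.edges, f ⊆ X.verts) {a : V}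
    {L : ℕ} (ha : a ∈ X.verts) (h : IsCycleLen Y (φ a) L) : IsCycleLen X a L := by
  obtain ⟨hL, e, hE, hV, h3, hd, ha0, haL, hano, h2c, h3c, hfar⟩ := h
  have he : ∀ i < L, e i ⊆ Y.verts := fun i hi =>
    hV ▸ subset_biUnion_of_mem e (mem_range.mpr hi)
  have hcard : ∀ i j, i < L → (vertsPreimage X φ (e i) ∩ vertsPreimage X φ (e j)).card
      = (e i ∩ e j).card := fun i j hi => by
    rw [← vertsPreimage_inter, hφ.card_vertsPreimage (inter_subset_left.trans (he i hi))]
  refine ⟨hL, fun i => vertsPreimage X φ (e i), hφ.edges_eq hX hE he, hφ.verts_eq hV,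
    fun i hi => (hφ.card_vertsPreimage (he i hi)).trans (h3 i hi),
    fun i j hi hj hij h => hd i j hi hj hij ?_, by simp [ha, ha0], by simp [ha, haL],
    fun i h1 hi => by simp [hano i h1 hi], fun h2 => (hcard 0 1 (by omega)).trans (h2c h2),
    fun h3L => ⟨?_, fun i hi => (hcard i (i + 1) (by omega)).trans ((h3c h3L).2 i hi)⟩,
    fun i j hij hj h2 hle => by rw [← vertsPreimage_inter, hfar i j hij hj h2 hle,
      vertsPreimage_empty]⟩
  · rw [← hφ.image_vertsPreimage (he i hi), show vertsPreimage X φ (e i) = _ from h,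
      hφ.image_vertsPreimage (he j hj)]
  · rw [← vertsPreimage_inter, (h3c h3L).1, ← image_singleton,
      hφ.vertsPreimage_image (singleton_subset_iff.mpr ha)]

end IsUnmarkedIso

end Iso


section Dangers

variable {H X : MarkedHypergraph V} {x : V}

lemma mem_famS_iff {S : MarkedHypergraph V} {s : V} :
    (S, s) ∈ famS ↔ ∃ m L, 1 ≤ L ∧ IsPathLen S s m L ∧ S.marked = {m} := by
  constructor
  · rintro ⟨⟨m, L, hL, h, hm⟩, hcard⟩
    obtain ⟨u, hu⟩ := card_eq_one.mp hcard
    have hmu : m = u := mem_singleton.mp (hu ▸ hm)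
    exact ⟨m, L, hL, h, hmu ▸ hu⟩
  · rintro ⟨m, L, hL, h, hm⟩
    exact ⟨⟨m, L, hL, h, hm ▸ mem_singleton_self m⟩, hm ▸ card_singleton m⟩

lemma mem_famD0_of_pointedIso {S : MarkedHypergraph V} {s : V} (hX : X.IsValid)
    (hx : x ∈ X.verts) (h : PointedIso X x S s) (hS : (S, s) ∈ famD0) : (X, x) ∈ famD0 := by
  obtain ⟨φ, hinj, himg, hedge, hmk, rfl⟩ := h
  have hφ : IsUnmarkedIso φ X S := ⟨hinj, himg, hedge⟩
  have hXE : ∀ f ∈ X.edges, f ⊆ X.verts := fun f hf => (hX.2.1 f hf).1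
  rcases hS with hS | ⟨⟨L, hC⟩, hS⟩
  · obtain ⟨m, L, hL, hP, hm⟩ := mem_famS_iff.mp hS
    obtain ⟨m', hm', rfl⟩ := mem_image.mp (himg ▸ hP.right_mem)
    refine Or.inl (mem_famS_iff.mpr ⟨m', L, hL, hφ.isPathLen hXE hx hm' hP, ?_⟩)
    ext v
    refine ⟨fun hv => mem_singleton.mpr (hinj (hX.2.2 hv) hm' ?_), fun hv => ?_⟩
    · simpa [hm] using (hmk v (hX.2.2 hv)).mp hv
    · rw [mem_singleton.mp hv, hmk m' hm', hm]
      exact mem_singleton_self _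
  · refine Or.inr ⟨⟨L, hφ.isCycleLen hXE hx hC⟩, eq_empty_of_forall_notMem fun v hv => ?_⟩
    have hS : S.marked = ∅ := hS
    simpa [hS] using (hmk v (hX.2.2 hv)).mp hv

lemma mem_xFam_famD0 :
    X ∈ xFam famD0 H x ↔ X.IsValid ∧ X.IsSub H ∧ x ∈ X.verts ∧ (X, x) ∈ famD0 := by
  constructor
  · rintro ⟨hX, hsub, hx, p, hp, hiso⟩
    exact ⟨hX, hsub, hx, mem_famD0_of_pointedIso hX hx hiso hp⟩
  · rintro ⟨hX, hsub, hx, hD⟩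
    exact ⟨hX, hsub, hx, (X, x), hD,
      id, Set.injOn_id _, image_id, fun e _ => by rw [image_id], fun _ _ => Iff.rfl, rfl⟩

lemma mem_xFam_of_isPathLen {m : V} {L : ℕ} (hsub : X.IsSub H) (hL : 1 ≤ L)
    (h : IsPathLen X x m L) (hm : X.marked = {m}) : X ∈ xFam famD0 H x :=
  mem_xFam_famD0.mpr ⟨h.isValid hsub.marked_subset, hsub, h.left_mem,
    Or.inl (mem_famS_iff.mpr ⟨m, L, hL, h, hm⟩)⟩

lemma mem_xFam_of_isCycleLen {L : ℕ} (hsub : X.IsSub H) (h : IsCycleLen X x L)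
    (hm : X.marked = ∅) : X ∈ xFam famD0 H x :=
  mem_xFam_famD0.mpr ⟨h.isValid hsub.marked_subset, hsub, h.mem, Or.inr ⟨⟨L, h⟩, hm⟩⟩

end Dangers

section Game

variable {H X : MarkedHypergraph V} {x y : V}

lemma mem_free_of_mem_inter {𝒳 : Set (MarkedHypergraph V)} (hy : y ∈ inter H 𝒳) :
    y ∈ H.verts \ H.marked :=
  mem_sdiff.mpr ⟨hy.1, hy.2.1⟩

lemma inter_eq_empty_of_mem_xFam {F : Set (MarkedHypergraph V × V)}
    {X₁ X₂ : MarkedHypergraph V} (h₁ : X₁ ∈ xFam F H x) (h₂ : X₂ ∈ xFam F H x)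
    (h : X₁.verts ∩ X₂.verts ⊆ insert x H.marked) :
    inter (H.plus x) (xFam F H x) = ∅ :=
  Set.eq_empty_of_forall_notMem fun _ hv =>
    hv.2.1 (h (mem_inter.mpr ⟨hv.2.2 X₁ h₁, hv.2.2 X₂ h₂⟩))

lemma winPattern_of_mem_xFam (hX : X ∈ xFam famD0 H x) (hy : y ∉ X.verts) :
    WinPattern ((H.plus x).minus y) := by
  obtain ⟨hXv, hsub, hx, hD⟩ := mem_xFam_famD0.mp hX
  have hsub' := hsub.plus_minus hx hy fun f hf => (hXv.2.1 f hf).1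
  rcases hD with hS | ⟨⟨L, hC⟩, hX0⟩
  · obtain ⟨m, L, hL, hP, hm⟩ := mem_famS_iff.mp hS
    exact Or.inr (Or.inl ⟨X.plus x, hsub', x, m, L, hL, hP, by rw [plus_marked, hm]⟩)
  · have hX0 : X.marked = ∅ := hX0
    exact Or.inr (Or.inr ⟨X.plus x, x, hsub', L, hC, by simp [hX0]⟩)

lemma winPattern_of_notMem_inter (hy : y ∈ (H.plus x).verts \ (H.plus x).marked)
    (hyI : y ∉ inter (H.plus x) (xFam famD0 H x)) : WinPattern ((H.plus x).minus y) := by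
  have hyI : ¬ ∀ X ∈ xFam famD0 H x, y ∈ X.verts := fun h =>
    hyI ⟨(mem_sdiff.mp hy).1, (mem_sdiff.mp hy).2, h⟩
  obtain ⟨X, hX, hyX⟩ := not_forall₂.mp hyI
  exact winPattern_of_mem_xFam hX hyX

lemma notMem_inter_or_winPattern (hnt : ¬ H.TrivialMakerWin) (hx : x ∉ H.marked)
    (hP : WinPattern ((H.plus x).minus y)) :
    y ∉ inter (H.plus x) (xFam famD0 H x) ∨ WinPattern H := by
  rcases hP with ⟨e, he, heM⟩ | ⟨N, hsub, a, b, L, hL, hP, hN⟩ |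
    ⟨C, a, hsub, L, hC, hCa⟩
  · refine absurd ⟨e, (mem_filter.mp he).1, ?_⟩ hnt
    refine (card_le_card fun v hv => ?_).trans (card_singleton x).le
    have hv' := heM (mem_sdiff.mp hv).1
    simp only [minus_marked, plus_marked, mem_erase, mem_insert, (mem_sdiff.mp hv).2] at hv'
    exact mem_singleton.mpr (hv'.2.resolve_right not_false)
  · have hyN : y ∉ N.verts := fun h => (mem_erase.mp (hsub.1 h)).1 rfl
    by_cases hxN : x ∈ N.verts
    · have hxab : x ∈ ({a, b} : Finset V) := hN ▸ hsub.mem_marked_of_plus_minus hxN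
      obtain ⟨b', hP', hN'⟩ : ∃ b', IsPathLen N x b' L ∧ N.marked = {x, b'} := by
        rcases mem_insert.mp hxab with rfl | hxb
        · exact ⟨b, hP, hN⟩
        · rw [mem_singleton.mp hxb]
          exact ⟨a, hP.symm, by rw [hN, pair_comm]⟩
      refine Or.inl fun hyI => hyN (hyI.2.2 (N.unmark x) (mem_xFam_of_isPathLen
        (hsub.unmark_of_plus_minus hx) hL hP' ?_))
      rw [unmark, hN', erase_insert (notMem_singleton.mpr (hP'.ne hL))]
    · refine Or.inr (Or.inr (Or.inl
        ⟨N.unmark x, hsub.unmark_of_plus_minus hx, a, b, L, hL, hP, ?_⟩))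
      rw [unmark, erase_eq_of_notMem fun h => hxN (hsub.marked_subset h), hN]
  · have hyC : y ∉ C.verts := fun h => (mem_erase.mp (hsub.1 h)).1 rfl
    have hsub' := hsub.unmark_of_plus_minus hx
    by_cases hxC : x ∈ C.verts
    · obtain rfl : x = a := mem_singleton.mp (hCa ▸ hsub.mem_marked_of_plus_minus hxC)
      refine Or.inl fun hyI => hyC (hyI.2.2 (C.unmark x)
        (mem_xFam_of_isCycleLen hsub' hC ?_))
      rw [unmark, hCa, erase_singleton]
    · refine Or.inr (Or.inr (Or.inr ⟨C.unmark x, a, hsub', L, hC, ?_⟩))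
      rw [unmark, erase_eq_of_notMem fun h => hxC (hsub.marked_subset h), hCa]

lemma not_trivialMakerWin_of_mem_inter (hval : H.IsValid) (hunif : H.IsUniform 3)
    (hnt : ¬ H.TrivialMakerWin) (hx : x ∉ H.marked)
    (hy : y ∈ inter (H.plus x) (xFam famD0 H x)) : ¬ ((H.plus x).minus y).TrivialMakerWin := by
  rintro ⟨e, he, hcard⟩
  obtain ⟨heH, hye⟩ := mem_filter.mp he
  have h2 : 2 ≤ (e \ H.marked).card := by
    by_contra h
    exact hnt ⟨e, heH, by omega⟩
  have hsd : e \ ((H.plus x).minus y).marked = (e \ H.marked).erase x := by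
    ext v
    simp only [minus_marked, plus_marked, mem_sdiff, mem_erase, mem_insert]
    grind
  rw [hsd] at hcard
  have hxe : x ∈ e \ H.marked := by
    by_contra h
    rw [erase_eq_of_notMem h] at hcard
    omega
  -- `e` is a `3`-edge through `x` with exactly one marked vertex: a snake at `x` missing `y`
  obtain ⟨m, hm⟩ : ∃ m, e ∩ H.marked = {m} := card_eq_one.mp (by
    have := card_erase_of_mem hxe
    have := card_sdiff_add_card_inter e H.marked
    have := hunif e heH
    omega)
  have hmem := mem_inter.mp (hm ▸ mem_singleton_self m)
  have hX : (⟨e, {e}, e ∩ H.marked⟩ : MarkedHypergraph V) ∈ xFam famD0 H x :=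
    mem_xFam_of_isPathLen ⟨(hval.2.1 e heH).1, singleton_subset_iff.mpr heH, rfl⟩ le_rfl
      (isPathLen_one rfl rfl (hunif e heH) (mem_sdiff.mp hxe).1 hmem.1
        fun h => hx (h ▸ hmem.2)) hm
  exact hye (hy.2.2 _ hX)

lemma trivialMakerWin_or_exists_inter_eq_empty_of_nunchaku {N : MarkedHypergraph V}
    (hsub : N.IsSub H) (hN : IsNunchaku N) : H.TrivialMakerWin ∨
      ∃ c ∈ H.verts \ H.marked, inter (H.plus c) (xFam famD0 H c) = ∅ := by
  obtain ⟨a, b, L, hL, hP, hab⟩ := hN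
  have hmarked : ∀ v ∈ N.verts, v ∈ H.marked ↔ v = a ∨ v = b := fun v hv => by
    simpa [hv] using Finset.ext_iff.mp (hsub.2.2.symm.trans hab) v
  have haM := (hmarked a hP.left_mem).mpr (Or.inl rfl)
  have hbM := (hmarked b hP.right_mem).mpr (Or.inr rfl)
  rcases Nat.lt_or_ge L 2 with hL1 | hL2
  · obtain rfl : L = 1 := by omega
    rcases hP with ⟨h0, -⟩ | ⟨-, hne, e, hE, -, h3, -, ha, hb, -⟩
    · omega
    refine Or.inl ⟨e 0, hsub.2.1 (by simp [hE]), ?_⟩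
    have hsd : e 0 \ H.marked ⊆ e 0 \ {a, b} :=
      sdiff_subset_sdiff subset_rfl (insert_subset haM (singleton_subset_iff.mpr hbM))
    have := card_le_card hsd
    rw [card_sdiff_of_subset (insert_subset ha (singleton_subset_iff.mpr hb)), h3 0 (by omega),
      card_pair hne] at this
    omega
  obtain ⟨c, hcN, hca, hcb, P₁, P₂, h₁, h₂, hP₁, hP₂, h12⟩ := hP.exists_split hL2
  have hbP₁ : b ∉ P₁.verts := fun h =>
    hcb (mem_singleton.mp (h12 ▸ mem_inter.mpr ⟨h, hP₂.right_mem⟩)).symm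
  have haP₂ : a ∉ P₂.verts := fun h =>
    hca (mem_singleton.mp (h12 ▸ mem_inter.mpr ⟨hP₁.right_mem, h⟩)).symm
  refine Or.inr ⟨c, mem_sdiff.mpr ⟨hsub.1 hcN, fun h => ((hmarked c hcN).mp h).elim hca hcb⟩,
    inter_eq_empty_of_mem_xFam (mem_xFam_of_isPathLen (h₁.trans hsub) le_rfl hP₁ ?_)
      (mem_xFam_of_isPathLen (h₂.trans hsub) (by omega) hP₂ ?_) (h12 ▸ by simp)⟩
  · rw [h₁.2.2, hab, inter_insert_of_mem hP₁.right_mem, inter_singleton_of_notMem hbP₁]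
    rfl
  · rw [h₂.2.2, hab, pair_comm, inter_insert_of_mem hP₂.right_mem,
      inter_singleton_of_notMem haP₂]
    rfl

lemma exists_inter_eq_empty_of_necklace {C : MarkedHypergraph V} {a : V} (hsub : C.IsSub H)
    (hC : IsNecklace C a) :
    ∃ c ∈ H.verts \ H.marked, inter (H.plus c) (xFam famD0 H c) = ∅ := by
  obtain ⟨L, hcyc, hCa⟩ := hC
  have hmarked : ∀ v ∈ C.verts, v ∈ H.marked ↔ v = a := fun v hv => by
    simpa [hv] using Finset.ext_iff.mp (hsub.2.2.symm.trans hCa) v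
  obtain ⟨c, hcC, hca, P₁, P₂, h₁, h₂, hP₁, hP₂, h12⟩ := hcyc.exists_split
  have hmarkedP : ∀ P : MarkedHypergraph V, P.IsSub C → a ∈ P.verts → P.marked = {a} :=
    fun P hP haP => by rw [hP.2.2, hCa, inter_singleton_of_mem haP]
  refine ⟨c, mem_sdiff.mpr ⟨hsub.1 hcC, fun h => hca ((hmarked c hcC).mp h)⟩,
    inter_eq_empty_of_mem_xFam
      (mem_xFam_of_isPathLen (h₁.trans hsub) le_rfl hP₁ (hmarkedP P₁ h₁ hP₁.right_mem))
      (mem_xFam_of_isPathLen (h₂.trans hsub) (by have := hcyc.1; omega) hP₂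
        (hmarkedP P₂ h₂ hP₂.right_mem)) (h12.trans ?_)⟩
  exact insert_subset_insert c (singleton_subset_iff.mpr
    ((hmarked a hcyc.mem).mpr rfl))

lemma trivialMakerWin_or_exists_inter_eq_empty (hP : WinPattern H) : H.TrivialMakerWin ∨
    ∃ c ∈ H.verts \ H.marked, inter (H.plus c) (xFam famD0 H c) = ∅ := by
  rcases hP with ⟨e, he, heM⟩ | ⟨N, hsub, hN⟩ | ⟨C, a, hsub, hC⟩
  · exact Or.inl ⟨e, he, by simp [sdiff_eq_empty_iff_subset.mpr heM]⟩
  · exact trivialMakerWin_or_exists_inter_eq_empty_of_nunchaku hsub hN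
  · exact Or.inr (exists_inter_eq_empty_of_necklace hsub hC)

lemma Wk_one_of_trivialMakerWin (hval : H.IsValid) (htriv : H.TrivialMakerWin)
    (hne : (H.verts \ H.marked).Nonempty) : Wk 1 H := by
  obtain ⟨e, he, he1⟩ := htriv
  obtain ⟨x, hx, hex⟩ : ∃ x ∈ H.verts \ H.marked, e ⊆ insert x H.marked := by
    rcases (e \ H.marked).eq_empty_or_nonempty with h | ⟨x, hx⟩
    · obtain ⟨x, hx⟩ := hne
      exact ⟨x, hx, (sdiff_eq_empty_iff_subset.mp h).trans (subset_insert _ _)⟩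
    · refine ⟨x, mem_sdiff.mpr ⟨(hval.2.1 e he).1 (mem_sdiff.mp hx).1, (mem_sdiff.mp hx).2⟩,
        fun v hv => ?_⟩
      by_cases hvM : v ∈ H.marked
      · exact mem_insert_of_mem hvM
      · rw [card_le_one.mp he1 v (mem_sdiff.mpr ⟨hv, hvM⟩) x hx]
        exact mem_insert_self x _
  refine ⟨x, hx, fun y hy =>
    Or.inl ⟨e, mem_filter.mpr ⟨he, fun hye => ?_⟩, fun v hv => ?_⟩⟩
  · exact (mem_sdiff.mp hy).2 (hex hye)
  · exact mem_erase.mpr ⟨fun hvy => (mem_sdiff.mp hy).2 (hvy ▸ hex hv), hex hv⟩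

lemma Wk_one_of_winPattern (hval : H.IsValid) (hP : WinPattern H)
    (hne : (H.verts \ H.marked).Nonempty) : Wk 1 H := by
  rcases trivialMakerWin_or_exists_inter_eq_empty hP with htriv | ⟨c, hc, hI⟩
  · exact Wk_one_of_trivialMakerWin hval htriv hne
  · exact ⟨c, hc, fun y hy => winPattern_of_notMem_inter hy (hI ▸ Set.notMem_empty y)⟩

lemma Wk_of_winPattern {k : ℕ} (hval : H.IsValid) (hP : WinPattern H)
    (hk : 2 * k ≤ (H.verts \ H.marked).card) : Wk k H := by
  induction k generalizing H with
  | zero => exact hP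
  | succ k ih =>
    obtain ⟨x, hx, hW⟩ := Wk_one_of_winPattern hval hP (card_pos.mp (by omega))
    refine ⟨x, hx, fun y hy =>
      ih (hval.plus_minus (mem_sdiff.mp hx).1 (mem_free_plus.mp hy).2.symm) (hW y hy) ?_⟩
    rw [card_free_plus_minus hx hy]
    omega

lemma not_J_succ_iff {F : Set (MarkedHypergraph V × V)} {r : ℕ} :
    ¬ J F (r + 1) H ↔ ∃ x ∈ H.verts \ H.marked,
      ∀ y ∈ inter (H.plus x) (xFam F H x), ¬ J F r ((H.plus x).minus y) := by
  simp only [J, not_forall, not_exists, not_and, exists_prop]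

lemma not_J_one_iff_Wk_one (hnt : ¬ H.TrivialMakerWin) : ¬ J famD0 1 H ↔ Wk 1 H := by
  rw [not_J_succ_iff]
  simp only [J, not_true_eq_false, imp_false]
  constructor
  · rintro ⟨x, hx, hI⟩
    exact ⟨x, hx, fun y hy => winPattern_of_notMem_inter hy (hI y)⟩
  · rintro ⟨x, hx, hW⟩
    by_cases hP : WinPattern H
    · obtain ⟨c, hc, hI⟩ := (trivialMakerWin_or_exists_inter_eq_empty hP).resolve_left hnt
      exact ⟨c, hc, fun y hy => hI.subset hy⟩
    · exact ⟨x, hx, fun y hy => ((notMem_inter_or_winPattern hnt (mem_sdiff.mp hx).2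
        (hW y (mem_free_of_mem_inter hy))).resolve_right hP) hy⟩

end Game

end MB

/-- Proposition 3.16: `J_r(𝒟₀,H)` fails iff Maker can force a fully marked edge,
a nunchaku or a necklace within `r` rounds. -/
theorem statement18 {V : Type} [DecidableEq V] (r : ℕ) (hr : 1 ≤ r)
    (H : MB.MarkedHypergraph V) (hval : H.IsValid) (hunif : H.IsUniform 3)
    (hnt : ¬ H.TrivialMakerWin) (hcard : 2 * r ≤ (H.verts \ H.marked).card) :
    ¬ MB.J MB.famD0 r H ↔ MB.Wk r H := by
  open Finset MB MarkedHypergraph in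
  induction r, hr using Nat.le_induction generalizing H with
  | base => exact not_J_one_iff_Wk_one hnt
  | succ r _ ih =>
    rw [not_J_succ_iff, Wk]
    refine exists_congr fun x => and_congr_right fun hx => ?_
    have hnext : ∀ y ∈ (H.plus x).verts \ (H.plus x).marked, ((H.plus x).minus y).IsValid ∧
        2 * r ≤ (((H.plus x).minus y).verts \ ((H.plus x).minus y).marked).card := fun y hy =>
      ⟨hval.plus_minus (mem_sdiff.mp hx).1 (mem_free_plus.mp hy).2.symm,
        by rw [card_free_plus_minus hx hy]; omega⟩
    have hstep : ∀ y ∈ inter (H.plus x) (xFam famD0 H x),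
        ¬ J famD0 r ((H.plus x).minus y) ↔ Wk r ((H.plus x).minus y) := fun y hy =>
      ih _ (hnext y (mem_free_of_mem_inter hy)).1 hunif.plus_minus
        (not_trivialMakerWin_of_mem_inter hval hunif hnt (mem_sdiff.mp hx).2 hy)
        (hnext y (mem_free_of_mem_inter hy)).2
    constructor <;> intro h y hy
    · by_cases hyI : y ∈ inter (H.plus x) (xFam famD0 H x)
      · exact (hstep y hyI).mp (h y hyI)
      · exact Wk_of_winPattern (hnext y hy).1 (winPattern_of_notMem_inter hy hyI) (hnext y hy).2
    · exact (hstep y hy).mpr (h y (mem_free_of_mem_inter hy))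
end

section
/- Let H be a marked hypergraph that is not a trivial Maker win, with |V(H)∖M(H)| ≥ 2, and suppose that J_1(𝒟_0,H) holds. Then for every m ∈ M(H), H contains no m-tadpole and no m-snake as a subhypergraph. -/
/-!
Because `H` is not a trivial Maker win, no 3-edge of `H` carries two marked vertices. By induction
on its length, a path ending at a marked vertex `b` has no other marked vertex: if its first edge
contained a marked `v ≠ b`, then at the common vertex `c` of the first two edges, the first edge
(from `c` to `v`) and the rest of the path (from `c` to `b`) would be two snakes at `c` meeting only
in `c`, while `J₁(𝒟₀,H)` makes any two `𝒟₀`-dangers at an unmarked vertex share another unmarked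
vertex. An `m`-snake is such a path with a second marked vertex `m`. A cycle at a marked vertex
splits the same way into two snakes ending at it. For an `m`-tadpole built from an `mb`-path and a
`b`-cycle, the reversed path is a snake at `b`, and the cycle contains another `𝒟₀`-danger at `b`
(a snake to a marked vertex of the cycle, or the unmarked cycle itself) meeting it only in `b`.
-/

namespace MB

open Finset MarkedHypergraph

variable {V : Type}

theorem MarkedHypergraph.IsValid.mem_verts {H : MarkedHypergraph V} (hval : H.IsValid)
    {f : Finset V} (hf : f ∈ H.edges) {v : V} (hv : v ∈ f) : v ∈ H.verts :=
  (hval.2.1 f hf).1 hv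

variable [DecidableEq V]

/- `IsEdgePath` (of positive length) and `IsEdgeCycle` are `IsPathLen` and `IsCycleLen` stated for
the edge sequence alone, with no vertex or edge set attached. -/
structure IsEdgePath (e : ℕ → Finset V) (a b : V) (L : ℕ) : Prop where
  one_le : 1 ≤ L
  ne : a ≠ b
  card_eq : ∀ i, i < L → (e i).card = 3
  injOn : ∀ i j, i < L → j < L → i ≠ j → e i ≠ e j
  mem_first : a ∈ e 0
  mem_last : b ∈ e (L - 1)
  card_inter_succ : ∀ i, i + 1 < L → (e i ∩ e (i + 1)).card = 1
  inter_eq_empty : ∀ i j, i + 2 ≤ j → j < L → e i ∩ e j = ∅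
  not_mem_start : ∀ i, 1 ≤ i → i < L → a ∉ e i
  not_mem_end : ∀ i, i + 1 < L → b ∉ e i

structure IsEdgeCycle (e : ℕ → Finset V) (a : V) (L : ℕ) : Prop where
  two_le : 2 ≤ L
  card_eq : ∀ i, i < L → (e i).card = 3
  injOn : ∀ i j, i < L → j < L → i ≠ j → e i ≠ e j
  mem_first : a ∈ e 0
  mem_last : a ∈ e (L - 1)
  not_mem : ∀ i, 0 < i → i + 1 < L → a ∉ e i
  card_inter_of_eq_two : L = 2 → (e 0 ∩ e 1).card = 2
  of_three_le : 3 ≤ L → e 0 ∩ e (L - 1) = {a} ∧ ∀ i, i + 1 < L → (e i ∩ e (i + 1)).card = 1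
  inter_eq_empty : ∀ i j, i < j → j < L → 2 ≤ j - i → j - i ≤ L - 2 → e i ∩ e j = ∅

theorem IsPathLen.exists_isEdgePath {P : MarkedHypergraph V} {a b : V} {L : ℕ}
    (hP : IsPathLen P a b L) (hL : 1 ≤ L) :
    ∃ e, P.edges = (range L).image e ∧ P.verts = (range L).biUnion e ∧ IsEdgePath e a b L := by
  obtain ⟨rfl, -⟩ | ⟨hL, hab, e, hE, hV, h₁, h₂, h₃, h₄, h₅, h₆, h₇, h₈⟩ := hP
  · omega
  · exact ⟨e, hE, hV, hL, hab, h₁, h₂, h₃, h₄, h₅, h₆, h₇, h₈⟩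

theorem IsCycleLen.exists_isEdgeCycle {C : MarkedHypergraph V} {a : V} {L : ℕ}
    (hC : IsCycleLen C a L) :
    ∃ e, C.edges = (range L).image e ∧ C.verts = (range L).biUnion e ∧ IsEdgeCycle e a L := by
  obtain ⟨hL, e, hE, hV, h₁, h₂, h₃, h₄, h₅, h₆, h₇, h₈⟩ := hC
  exact ⟨e, hE, hV, hL, h₁, h₂, h₃, h₄, h₅, h₆, h₇, h₈⟩

section EdgeSequences

variable {e : ℕ → Finset V} {a b c y : V} {L : ℕ}

theorem IsEdgePath.single {f : Finset V} (hcard : f.card = 3) (ha : a ∈ f) (hb : b ∈ f)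
    (hab : a ≠ b) : IsEdgePath (fun _ => f) a b 1 :=
  ⟨le_rfl, hab, fun _ _ => hcard, fun i j hi hj hij => absurd (by omega) hij, ha, hb,
    fun _ h => absurd h (by omega), fun _ _ _ h => absurd h (by omega),
    fun _ _ h => absurd h (by omega), fun _ h => absurd h (by omega)⟩

theorem IsEdgePath.tail (h : IsEdgePath e a b (L + 2)) (hc₀ : c ∈ e 0) (hc₁ : c ∈ e 1) :
    IsEdgePath (fun i => e (i + 1)) c b (L + 1) where
  one_le := by omega
  ne := by rintro rfl; exact h.not_mem_end 0 (by omega) hc₀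
  card_eq i hi := h.card_eq (i + 1) (by omega)
  injOn i j hi hj hij := h.injOn _ _ (by omega) (by omega) (by omega)
  mem_first := hc₁
  mem_last := by simpa using h.mem_last
  card_inter_succ i hi := h.card_inter_succ (i + 1) (by omega)
  inter_eq_empty i j hij hj := h.inter_eq_empty (i + 1) (j + 1) (by omega) (by omega)
  not_mem_start i hi hi' hc := by
    simpa [h.inter_eq_empty 0 (i + 1) (by omega) (by omega)] using mem_inter.2 ⟨hc₀, hc⟩
  not_mem_end i hi := h.not_mem_end (i + 1) (by omega)

theorem IsEdgePath.reverse (h : IsEdgePath e a b L) :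
    IsEdgePath (fun i => e (L - 1 - i)) b a L where
  one_le := h.one_le
  ne := h.ne.symm
  card_eq i hi := h.card_eq _ (by omega)
  injOn i j hi hj hij := h.injOn _ _ (by omega) (by omega) (by omega)
  mem_first := h.mem_last
  mem_last := by simpa only [Nat.sub_self] using h.mem_first
  card_inter_succ i hi := by
    rw [Finset.inter_comm, show L - 1 - i = L - 1 - (i + 1) + 1 by omega]
    exact h.card_inter_succ _ (by omega)
  inter_eq_empty i j hij hj := by
    rw [Finset.inter_comm]
    exact h.inter_eq_empty _ _ (by omega) (by omega)
  not_mem_start i hi hi' := h.not_mem_end _ (by omega)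
  not_mem_end i hi := h.not_mem_start _ (by omega) (by omega)

theorem IsEdgePath.eq_of_mem_inter (h : IsEdgePath e a b L) (hc₀ : c ∈ e 0) (hc₁ : c ∈ e 1)
    (hy₀ : y ∈ e 0) {j : ℕ} (hj : 1 ≤ j) (hjL : j < L) (hy : y ∈ e j) : y = c := by
  obtain rfl | hj := hj.eq_or_lt
  · exact card_le_one.1 (h.card_inter_succ 0 hjL).le _ (mem_inter.2 ⟨hy₀, hy⟩) _
      (mem_inter.2 ⟨hc₀, hc₁⟩)
  · simpa [h.inter_eq_empty 0 j hj hjL] using mem_inter.2 ⟨hy₀, hy⟩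

theorem IsEdgeCycle.eq_of_mem_inter (h : IsEdgeCycle e a L) (hy₀ : y ∈ e 0) {j : ℕ}
    (hj : 2 ≤ j) (hjL : j < L) (hy : y ∈ e j) : y = a := by
  by_cases hlast : j = L - 1
  · subst hlast
    simpa [(h.of_three_le (by omega)).1] using mem_inter.2 ⟨hy₀, hy⟩
  · simpa [h.inter_eq_empty 0 j (by omega) hjL (by omega) (by omega)] using
      mem_inter.2 ⟨hy₀, hy⟩

theorem IsEdgeCycle.exists_mem_inter_ne (h : IsEdgeCycle e a L) :
    ∃ c ∈ e 0, c ∈ e 1 ∧ c ≠ a := by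
  obtain hL | hL := h.two_le.eq_or_lt
  · obtain ⟨c, hc, hca⟩ :=
      exists_mem_ne (s := e 0 ∩ e 1) (by rw [h.card_inter_of_eq_two hL.symm]; omega) a
    exact ⟨c, (mem_inter.1 hc).1, (mem_inter.1 hc).2, hca⟩
  · obtain ⟨c, hc⟩ := card_pos.1 (((h.of_three_le hL).2 0 (by omega)).symm ▸ Nat.one_pos)
    exact ⟨c, (mem_inter.1 hc).1, (mem_inter.1 hc).2, by
      rintro rfl; exact h.not_mem 1 (by omega) (by omega) (mem_inter.1 hc).2⟩

theorem IsEdgeCycle.eq_or_eq_of_mem_inter (h : IsEdgeCycle e a L) (hc₀ : c ∈ e 0)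
    (hc₁ : c ∈ e 1) (hca : c ≠ a) (hy₀ : y ∈ e 0) (hy₁ : y ∈ e 1) : y = a ∨ y = c := by
  obtain hL | hL := h.two_le.eq_or_lt
  · by_contra! hy
    have ha₁ : a ∈ e 1 := by simpa [← hL] using h.mem_last
    have := two_lt_card.2 ⟨a, mem_inter.2 ⟨h.mem_first, ha₁⟩, c, mem_inter.2 ⟨hc₀, hc₁⟩,
      y, mem_inter.2 ⟨hy₀, hy₁⟩, hca.symm, hy.1.symm, hy.2.symm⟩
    rw [h.card_inter_of_eq_two hL.symm] at this
    omega
  · exact Or.inr (card_le_one.1 ((h.of_three_le hL).2 0 (by omega)).le _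
      (mem_inter.2 ⟨hy₀, hy₁⟩) _ (mem_inter.2 ⟨hc₀, hc₁⟩))

theorem IsEdgeCycle.tail (h : IsEdgeCycle e a L) (hc₀ : c ∈ e 0) (hc₁ : c ∈ e 1)
    (hca : c ≠ a) : IsEdgePath (fun i => e (i + 1)) c a (L - 1) := by
  have hL := h.two_le
  exact
  { one_le := by omega
    ne := hca
    card_eq := fun i hi => h.card_eq _ (by omega)
    injOn := fun i j hi hj hij => h.injOn _ _ (by omega) (by omega) (by omega)
    mem_first := hc₁
    mem_last := by rw [show L - 1 - 1 + 1 = L - 1 by omega]; exact h.mem_last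
    card_inter_succ := fun i hi => (h.of_three_le (by omega)).2 _ (by omega)
    inter_eq_empty := fun i j hij hj =>
      h.inter_eq_empty _ _ (by omega) (by omega) (by omega) (by omega)
    not_mem_start := fun i hi hi' hc => hca (h.eq_of_mem_inter hc₀ (by omega) (by omega) hc)
    not_mem_end := fun i hi => h.not_mem _ (by omega) (by omega) }

theorem IsEdgeCycle.take (h : IsEdgeCycle e a L) {i : ℕ} {w : V} (hi : i + 1 < L)
    (hw : w ∈ e i) (hwa : w ≠ a) (hmin : ∀ j < i, w ∉ e j) : IsEdgePath e a w (i + 1) where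
  one_le := by omega
  ne := hwa.symm
  card_eq j hj := h.card_eq j (by omega)
  injOn j k hj hk := h.injOn j k (by omega) (by omega)
  mem_first := h.mem_first
  mem_last := by simpa using hw
  card_inter_succ j hj := (h.of_three_le (by omega)).2 j (by omega)
  inter_eq_empty j k hjk hk := h.inter_eq_empty j k (by omega) (by omega) (by omega) (by omega)
  not_mem_start j hj hj' := h.not_mem j (by omega) (by omega)
  not_mem_end j hj := hmin j (by omega)

theorem IsEdgeCycle.exists_isEdgePath (h : IsEdgeCycle e a L) {i : ℕ} {w : V} (hi : i < L)
    (hw : w ∈ e i) (hwa : w ≠ a) : ∃ f k, IsEdgePath f a w k ∧ ∀ j < k, ∃ t < L, f j = e t := by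
  have hL := h.two_le
  by_cases hlast : w ∈ e (L - 1)
  · exact ⟨fun _ => e (L - 1), 1, .single (h.card_eq _ (by omega)) h.mem_last hlast hwa.symm,
      fun _ _ => ⟨L - 1, by omega, rfl⟩⟩
  · have hex : ∃ j, w ∈ e j := ⟨i, hw⟩
    have hle := Nat.find_min' hex hw
    have hne : Nat.find hex ≠ L - 1 := fun h' => hlast (h' ▸ Nat.find_spec hex)
    exact ⟨e, Nat.find hex + 1, h.take (by omega) (Nat.find_spec hex) hwa
      (fun j hj => Nat.find_min hex hj), fun j hj => ⟨j, by omega, rfl⟩⟩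

end EdgeSequences

namespace MarkedHypergraph

variable {H : MarkedHypergraph V}

theorem eq_of_mem_edge_of_mem_marked (hnt : ¬ H.TrivialMakerWin) {f : Finset V}
    (hf : f ∈ H.edges) (hcard : f.card ≤ 3) {v w : V} (hv : v ∈ f) (hw : w ∈ f) (hvm : v ∈ H.marked)
    (hwm : w ∈ H.marked) : v = w := by
  by_contra hvw
  refine hnt ⟨f, hf, ?_⟩
  have hsub : ({v, w} : Finset V) ⊆ H.marked ∩ f := by
    simp [insert_subset_iff, *]
  have := card_le_card hsub
  rw [card_pair hvw] at this
  rw [card_sdiff]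
  omega

def edgeSpan (H : MarkedHypergraph V) (e : ℕ → Finset V) (L : ℕ) : MarkedHypergraph V :=
  ⟨(range L).biUnion e, (range L).image e, (range L).biUnion e ∩ H.marked⟩

@[simp] theorem mem_edgeSpan_verts {e : ℕ → Finset V} {L : ℕ} {y : V} :
    y ∈ (H.edgeSpan e L).verts ↔ ∃ i < L, y ∈ e i := by
  simp [edgeSpan]

theorem edgeSpan_mem_xFam {F : Set (MarkedHypergraph V × V)} (hval : H.IsValid)
    {e : ℕ → Finset V} {L : ℕ} (he : ∀ j < L, e j ∈ H.edges) {i : ℕ} (hi : i < L) {x : V}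
    (hx : x ∈ e i) (hF : (H.edgeSpan e L, x) ∈ F) : H.edgeSpan e L ∈ xFam F H x := by
  have hxV : x ∈ (H.edgeSpan e L).verts := mem_edgeSpan_verts.2 ⟨i, hi, hx⟩
  refine ⟨⟨⟨x, hxV⟩, ?_, inter_subset_left⟩, ⟨?_, ?_, rfl⟩, hxV, _, hF, id, Set.injOn_id _,
    image_id, fun f _ => by rw [image_id], fun _ _ => Iff.rfl, rfl⟩
  · simp only [edgeSpan, mem_image, mem_range]
    rintro f ⟨j, hj, rfl⟩
    exact ⟨subset_biUnion_of_mem e (mem_range.2 hj), (hval.2.1 _ (he j hj)).2⟩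
  · intro y hy
    obtain ⟨j, hj, hy⟩ := mem_edgeSpan_verts.1 hy
    exact hval.mem_verts (he j hj) hy
  · simp only [edgeSpan, image_subset_iff, mem_range]
    exact he

end MarkedHypergraph

section Dangers

variable {H : MarkedHypergraph V} {e : ℕ → Finset V} {a b : V} {L : ℕ}

theorem exists_mem_verts_of_J_one {F : Set (MarkedHypergraph V × V)} (hJ : J F 1 H) {x : V}
    (hx : x ∈ H.verts \ H.marked) {X₁ X₂ : MarkedHypergraph V} (h₁ : X₁ ∈ xFam F H x)
    (h₂ : X₂ ∈ xFam F H x) : ∃ y ∈ X₁.verts, y ∈ X₂.verts ∧ y ≠ x ∧ y ∉ H.marked := by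
  obtain ⟨y, ⟨-, hy, hall⟩, -⟩ := hJ x hx
  simp only [plus, mem_insert, not_or] at hy
  exact ⟨y, hall X₁ h₁, hall X₂ h₂, hy⟩

theorem IsEdgePath.edgeSpan_mem_xFam (hval : H.IsValid) (h : IsEdgePath e a b L)
    (he : ∀ i < L, e i ∈ H.edges) (hb : b ∈ H.marked)
    (honly : ∀ i < L, ∀ v ∈ e i, v ∈ H.marked → v = b) : H.edgeSpan e L ∈ xFam famD0 H a := by
  have hmarked : (H.edgeSpan e L).marked = {b} := by
    ext v
    simp only [edgeSpan, mem_inter, mem_biUnion, mem_range, mem_singleton]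
    constructor
    · rintro ⟨⟨i, hi, hv⟩, hvm⟩
      exact honly i hi v hv hvm
    · rintro rfl
      exact ⟨⟨L - 1, by have := h.one_le; omega, h.mem_last⟩, hb⟩
  refine MarkedHypergraph.edgeSpan_mem_xFam hval he h.one_le h.mem_first
    (Or.inl ⟨?_, by simp [hmarked]⟩)
  exact ⟨b, L, h.one_le, Or.inr ⟨h.one_le, h.ne, e, rfl, rfl, h.card_eq, h.injOn, h.mem_first,
    h.mem_last, h.card_inter_succ, h.inter_eq_empty, h.not_mem_start, h.not_mem_end⟩,
    by simp [hmarked]⟩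

theorem edgeSpan_single_mem_xFam (hval : H.IsValid) (hnt : ¬ H.TrivialMakerWin)
    {f : Finset V} (hf : f ∈ H.edges) (hcard : f.card = 3) (ha : a ∈ f) (hb : b ∈ f)
    (hab : a ≠ b) (hbm : b ∈ H.marked) : H.edgeSpan (fun _ => f) 1 ∈ xFam famD0 H a :=
  (IsEdgePath.single hcard ha hb hab).edgeSpan_mem_xFam hval (fun _ _ => hf) hbm
    fun _ _ _ hv hvm => eq_of_mem_edge_of_mem_marked hnt hf hcard.le hv hb hvm hbm

theorem IsEdgeCycle.edgeSpan_mem_xFam (hval : H.IsValid) (h : IsEdgeCycle e a L)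
    (he : ∀ i < L, e i ∈ H.edges) (hno : ∀ i < L, ∀ v ∈ e i, v ∉ H.marked) :
    H.edgeSpan e L ∈ xFam famD0 H a := by
  refine MarkedHypergraph.edgeSpan_mem_xFam hval he (by have := h.two_le; omega) h.mem_first
    (Or.inr ⟨?_, ?_⟩)
  · exact ⟨L, h.two_le, e, rfl, rfl, h.card_eq, h.injOn, h.mem_first, h.mem_last, h.not_mem,
      h.card_inter_of_eq_two, h.of_three_le, h.inter_eq_empty⟩
  · ext v
    simp only [edgeSpan, mem_inter, mem_biUnion, mem_range, Finset.notMem_empty, iff_false,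
      not_and]
    rintro ⟨i, hi, hv⟩
    exact hno i hi v hv

end Dangers

section Obstructions

variable {H : MarkedHypergraph V} {e : ℕ → Finset V} {a b : V} {L : ℕ}

theorem IsEdgePath.eq_of_mem_marked (hval : H.IsValid) (hnt : ¬ H.TrivialMakerWin)
    (hJ : J famD0 1 H) (h : IsEdgePath e a b L) (he : ∀ i < L, e i ∈ H.edges)
    (hb : b ∈ H.marked) : ∀ i < L, ∀ v ∈ e i, v ∈ H.marked → v = b := by
  induction L generalizing e a with
  | zero => exact absurd h.one_le (by omega)
  | succ L ih =>
    obtain _ | L := L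
    · intro i hi v hv hvm
      obtain rfl : i = 0 := by omega
      exact eq_of_mem_edge_of_mem_marked hnt (he 0 (by omega)) (h.card_eq 0 (by omega)).le hv
        h.mem_last hvm hb
    obtain ⟨c, hc⟩ := card_pos.1 ((h.card_inter_succ 0 (by omega)).symm ▸ Nat.one_pos)
    obtain ⟨hc₀, hc₁⟩ := mem_inter.1 hc
    have he' : ∀ i < L + 1, e (i + 1) ∈ H.edges := fun i hi => he _ (by omega)
    have htail := ih (h.tail hc₀ hc₁) he'
    have hcm : c ∉ H.marked := fun hcm =>
      h.not_mem_end 0 (by omega) (htail 0 (by omega) c hc₁ hcm ▸ hc₀)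
    rintro (_ | i) hi v hv hvm
    · by_contra hvb
      have hD₁ := edgeSpan_single_mem_xFam hval hnt (he 0 (by omega))
        (h.card_eq 0 (by omega)) hc₀ hv (by rintro rfl; exact hcm hvm) hvm
      have hD₂ := (h.tail hc₀ hc₁).edgeSpan_mem_xFam hval he' hb htail
      obtain ⟨y, hy₁, hy₂, hyc, -⟩ := exists_mem_verts_of_J_one hJ
        (mem_sdiff.2 ⟨hval.mem_verts (he 0 (by omega)) hc₀, hcm⟩) hD₁ hD₂
      obtain ⟨-, -, hy₀⟩ := mem_edgeSpan_verts.1 hy₁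
      obtain ⟨j, hj, hy⟩ := mem_edgeSpan_verts.1 hy₂
      exact hyc (h.eq_of_mem_inter hc₀ hc₁ hy₀ (by omega) (by omega) hy)
    · exact htail i (by omega) v hv hvm

theorem IsEdgeCycle.not_mem_marked (hval : H.IsValid) (hnt : ¬ H.TrivialMakerWin)
    (hJ : J famD0 1 H) (h : IsEdgeCycle e a L) (he : ∀ i < L, e i ∈ H.edges) :
    a ∉ H.marked := by
  intro ha
  have hL := h.two_le
  obtain ⟨c, hc₀, hc₁, hca⟩ := h.exists_mem_inter_ne
  have he' : ∀ i < L - 1, e (i + 1) ∈ H.edges := fun i hi => he _ (by omega)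
  have honly := (h.tail hc₀ hc₁ hca).eq_of_mem_marked hval hnt hJ he' ha
  have hcm : c ∉ H.marked := fun hcm => hca (honly 0 (by omega) c hc₁ hcm)
  have hD₁ := edgeSpan_single_mem_xFam hval hnt (he 0 (by omega))
    (h.card_eq 0 (by omega)) hc₀ h.mem_first hca ha
  have hD₂ := (h.tail hc₀ hc₁ hca).edgeSpan_mem_xFam hval he' ha honly
  obtain ⟨y, hy₁, hy₂, hyc, hym⟩ := exists_mem_verts_of_J_one hJ
    (mem_sdiff.2 ⟨hval.mem_verts (he 0 (by omega)) hc₀, hcm⟩) hD₁ hD₂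
  obtain ⟨-, -, hy₀⟩ := mem_edgeSpan_verts.1 hy₁
  obtain ⟨_ | j, hj, hy⟩ := mem_edgeSpan_verts.1 hy₂
  · obtain rfl | rfl := h.eq_or_eq_of_mem_inter hc₀ hc₁ hca hy₀ hy
    exacts [hym ha, hyc rfl]
  · exact hym (h.eq_of_mem_inter hy₀ (by omega) (by omega) hy ▸ ha)

theorem IsEdgeCycle.exists_mem_xFam (hval : H.IsValid) (hnt : ¬ H.TrivialMakerWin)
    (hJ : J famD0 1 H) (h : IsEdgeCycle e a L) (he : ∀ i < L, e i ∈ H.edges) :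
    ∃ D ∈ xFam famD0 H a, ∀ y ∈ D.verts, ∃ i < L, y ∈ e i := by
  by_cases hw : ∃ i < L, ∃ w ∈ e i, w ∈ H.marked
  · obtain ⟨i, hi, w, hw, hwm⟩ := hw
    have hwa : w ≠ a := by
      rintro rfl
      exact h.not_mem_marked hval hnt hJ he hwm
    obtain ⟨f, k, hf, hfe⟩ := h.exists_isEdgePath hi hw hwa
    have hfH : ∀ j < k, f j ∈ H.edges := fun j hj => by
      obtain ⟨t, ht, hft⟩ := hfe j hj
      exact hft ▸ he t ht
    refine ⟨_, hf.edgeSpan_mem_xFam hval hfH hwm (hf.eq_of_mem_marked hval hnt hJ hfH hwm), ?_⟩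
    simp only [mem_edgeSpan_verts]
    rintro y ⟨j, hj, hy⟩
    obtain ⟨t, ht, hft⟩ := hfe j hj
    exact ⟨t, ht, hft ▸ hy⟩
  · push Not at hw
    exact ⟨_, h.edgeSpan_mem_xFam hval he hw, fun y => mem_edgeSpan_verts.1⟩

theorem not_isSnake (hval : H.IsValid) (hnt : ¬ H.TrivialMakerWin) (hJ : J famD0 1 H)
    (ha : a ∈ H.marked) {S : MarkedHypergraph V} (hS : S.IsSub H) : ¬ IsSnake S a := by
  rintro ⟨b, L, hL, hp, hb⟩
  obtain ⟨e, hSe, -, h⟩ := hp.exists_isEdgePath hL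
  have he : ∀ i < L, e i ∈ H.edges := fun i hi =>
    image_subset_iff.1 (hSe ▸ hS.2.1) i (mem_range.2 hi)
  have hbH : b ∈ H.marked := (mem_inter.1 (hS.2.2 ▸ hb)).2
  exact h.ne (h.eq_of_mem_marked hval hnt hJ he hbH 0 hL a h.mem_first ha)

theorem not_isTadpole (hval : H.IsValid) (hnt : ¬ H.TrivialMakerWin) (hJ : J famD0 1 H)
    (ha : a ∈ H.marked) {T : MarkedHypergraph V} (hT : T.IsSub H) : ¬ IsTadpole T a := by
  rintro ⟨b, P, C, ⟨l, hP⟩, ⟨L, hC⟩, hPC, -, hTe⟩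
  obtain ⟨g, hCe, hCv, hg⟩ := hC.exists_isEdgeCycle
  have hg₀ : 0 < L := by have := hg.two_le; omega
  have hgH : ∀ i < L, g i ∈ H.edges := fun i hi => image_subset_iff.1
    (hCe ▸ (subset_union_right.trans hTe.ge).trans hT.2.1) i (mem_range.2 hi)
  obtain rfl | hl := Nat.eq_zero_or_pos l
  · obtain rfl : a = b := by
      obtain h | h := hP
      exacts [h.2.1, absurd h.1 (by omega)]
    exact hg.not_mem_marked hval hnt hJ hgH ha
  obtain ⟨f, hPe, hPv, hf⟩ := hP.exists_isEdgePath hl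
  have hfH : ∀ i < l, f (l - 1 - i) ∈ H.edges := fun i hi => image_subset_iff.1
    (hPe ▸ (subset_union_left.trans hTe.ge).trans hT.2.1) _ (mem_range.2 (by omega))
  have honly := hf.reverse.eq_of_mem_marked hval hnt hJ hfH ha
  have hb : b ∉ H.marked := fun hb => hf.ne (honly 0 hl b hf.reverse.mem_first hb).symm
  obtain ⟨D, hD, hDC⟩ := hg.exists_mem_xFam hval hnt hJ hgH
  obtain ⟨y, hy₁, hy₂, hyb, -⟩ := exists_mem_verts_of_J_one hJ
    (mem_sdiff.2 ⟨hval.mem_verts (hgH 0 hg₀) hg.mem_first, hb⟩)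
    (hf.reverse.edgeSpan_mem_xFam hval hfH ha honly) hD
  obtain ⟨i, hi, hyP⟩ := mem_edgeSpan_verts.1 hy₁
  obtain ⟨j, hj, hyC⟩ := hDC y hy₂
  refine hyb (mem_singleton.1 (hPC ▸ mem_inter.2 ⟨?_, ?_⟩))
  · exact hPv ▸ mem_biUnion.2 ⟨_, mem_range.2 (by omega), hyP⟩
  · exact hCv ▸ mem_biUnion.2 ⟨j, mem_range.2 hj, hyC⟩

end Obstructions

end MB

theorem statement19_general {V : Type} [DecidableEq V] (H : MB.MarkedHypergraph V)
    (hval : H.IsValid) (hnt : ¬ H.TrivialMakerWin)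
    (hJ : MB.J MB.famD0 1 H) :
    ∀ m ∈ H.marked,
      (¬ ∃ T, MB.MarkedHypergraph.IsSub T H ∧ MB.IsTadpole T m) ∧
      (¬ ∃ S, MB.MarkedHypergraph.IsSub S H ∧ MB.IsSnake S m) :=
  fun _ hm => ⟨fun ⟨_, hT, ht⟩ => MB.not_isTadpole hval hnt hJ hm hT ht,
    fun ⟨_, hS, hs⟩ => MB.not_isSnake hval hnt hJ hm hS hs⟩

/-- Proposition 3.20: under `J_1(𝒟₀,H)`, no marked vertex admits a tadpole or a snake. -/
theorem statement19 {V : Type} [DecidableEq V] (H : MB.MarkedHypergraph V)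
    (hval : H.IsValid) (hnt : ¬ H.TrivialMakerWin)
    (hcard : 2 ≤ (H.verts \ H.marked).card) (hJ : MB.J MB.famD0 1 H) :
    ∀ m ∈ H.marked,
      (¬ ∃ T, MB.MarkedHypergraph.IsSub T H ∧ MB.IsTadpole T m) ∧
      (¬ ∃ S, MB.MarkedHypergraph.IsSub S H ∧ MB.IsSnake S m) :=
  statement19_general H hval hnt hJ
end
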